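/- arXiv:2007.16092 — 6 statements merged into one kernel-verified Lean document; each statement's English description precedes it below -/
import Mathlib

section
/- For q with 0 < |q| < 1 and n an integer, the coefficient of x^n in the Laurent expansion of θ_q(x)^2 equals q^{n(n-1)/2} · θ_{q²}(q^{1-n}), and in particular this coefficient is nonzero. -/
noncomputable def theta (q x : ℂ) : ℂ := ∑' m : ℤ, q ^ (m * (m - 1) / 2).toNat * x ^ m

noncomputable def gammaCoeff (k : ℕ) (n : ℤ) (q : ℂ) : ℂ :=
  ∑' m : {f : Fin k → ℤ // ∑ i, f i = n},
    q ^ ((∑ i, m.1 i * (m.1 i - 1)) / 2).toNat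

namespace ThetaProof

lemma sign_congr {a b : ℤ} (h : a % 2 = b % 2) : ((-1 : ℂ)) ^ a = (-1 : ℂ) ^ b := by
  obtain ⟨k, hk⟩ : ∃ k, a = b + 2 * k := ⟨(a - b) / 2, by omega⟩
  rw [hk, zpow_add₀ (by norm_num : (-1:ℂ) ≠ 0), zpow_mul]
  norm_num

lemma mul_form {q : ℂ} (hq : q ≠ 0) (a b A B : ℤ) :
    ((-1 : ℂ) ^ a * q ^ A) * ((-1 : ℂ) ^ b * q ^ B) = (-1 : ℂ) ^ (a + b) * q ^ (A + B) := by
  rw [zpow_add₀ (by norm_num : (-1:ℂ) ≠ 0), zpow_add₀ hq]; ring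

lemma neg_base (q : ℂ) (k : ℤ) : (-q) ^ k = (-1:ℂ) ^ k * q ^ k := by
  rw [show -q = -1 * q by ring, mul_zpow]

lemma sq_base (q : ℂ) (k : ℤ) : (q ^ 2) ^ k = q ^ (2 * k) := by
  rw [show (q ^ 2) = q ^ ((2:ℕ) : ℤ) by rw [zpow_natCast], ← zpow_mul]
  norm_num

lemma parity_sq (m : ℤ) : (m * m) % 2 = m % 2 := by
  have h : m * m - m = m * (m - 1) := by ring
  obtain ⟨k, hk⟩ := Int.even_mul_pred_self m
  omega

lemma mul_pred_nonneg (m : ℤ) : 0 ≤ m * (m - 1) := by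
  rcases le_or_gt m 0 with h | h
  · nlinarith
  · nlinarith

lemma summable_geom_abs {r : ℝ} (h0 : 0 ≤ r) (h1 : r < 1) :
    Summable (fun m : ℤ => r ^ m.natAbs) := by
  apply Summable.of_nat_of_neg_add_one
  · simpa using summable_geometric_of_lt_one h0 h1
  · have h := (summable_geometric_of_lt_one h0 h1).mul_left r
    apply h.congr
    intro n
    have : ((-((n:ℤ) + 1)).natAbs) = n + 1 := by omega
    rw [this, pow_succ, mul_comm]

lemma NS {q : ℂ} (hq0 : q ≠ 0) (hq1 : ‖q‖ < 1) (c a b : ℤ) (hc : 1 ≤ c) :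
    Summable (fun m : ℤ => ‖q ^ (c * (m * m) + a * m + b)‖) := by
  have hr0 : 0 < ‖q‖ := norm_pos_iff.mpr hq0
  apply Summable.of_norm_bounded_eventually (g := fun m : ℤ => ‖q‖ ^ m.natAbs)
    (summable_geom_abs hr0.le hq1)
  rw [Filter.eventually_cofinite]
  apply Set.Finite.subset (Set.finite_Icc (-(|a| + |b| + 1)) (|a| + |b| + 1))
  intro m hm
  simp only [Set.mem_setOf_eq, not_le] at hm
  by_contra hI
  simp only [Set.mem_Icc, not_and_or, not_le] at hI
  apply absurd hm
  push_neg
  rw [Real.norm_of_nonneg (norm_nonneg _), norm_zpow]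
  have habs : (m.natAbs : ℤ) = |m| := (Int.abs_eq_natAbs m).symm
  have hmbig : |a| + |b| + 1 ≤ |m| := by
    have ha1 := le_abs_self a; have ha2 := neg_abs_le a
    have hb1 := le_abs_self b; have hb2 := neg_abs_le b
    rcases hI with h | h
    · rw [show |m| = -m from abs_of_nonpos (by omega : m ≤ 0)]; omega
    · rw [show |m| = m from abs_of_nonneg (by omega : 0 ≤ m)]; omega
  have h1 : (m.natAbs : ℤ) ≤ c * (m * m) + a * m + b := by
    rw [habs]
    have h2 : |m| * |m| = m * m := abs_mul_abs_self m
    have h3 : -(|a| * |m|) ≤ a * m := by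
      have := neg_abs_le (a * m)
      rw [abs_mul] at this
      exact this
    have h4 : -|b| ≤ b := neg_abs_le b
    nlinarith [abs_nonneg m, abs_nonneg a, abs_nonneg b]
  calc ‖q‖ ^ (c * (m * m) + a * m + b) ≤ ‖q‖ ^ ((m.natAbs : ℤ)) :=
        zpow_le_zpow_right_of_le_one₀ hr0 hq1.le h1
    _ = ‖q‖ ^ m.natAbs := zpow_natCast _ _

lemma NS' {q : ℂ} (hq0 : q ≠ 0) (hq1 : ‖q‖ < 1) (s : ℂ) (hs : ‖s‖ = 1) (c a b : ℤ) (hc : 1 ≤ c) :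
    Summable (fun m : ℤ => ‖s ^ m * q ^ (c * (m * m) + a * m + b)‖) := by
  have := NS hq0 hq1 c a b hc
  apply this.congr
  intro m
  simp [norm_mul, norm_zpow, hs]


def splitEquiv : Bool × ℤ × ℤ ≃ ℤ × ℤ where
  toFun x := (x.2.1 + x.2.2 + if x.1 then 1 else 0, x.2.1 - x.2.2)
  invFun p :=
    if (p.1 + p.2) % 2 = 0 then (false, ((p.1 + p.2) / 2, (p.1 - p.2) / 2))
    else (true, ((p.1 + p.2 - 1) / 2, (p.1 - p.2 - 1) / 2))
  left_inv := by
    rintro ⟨b, c, d⟩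
    cases b
    · simp only [if_false, Bool.false_eq_true]
      rw [if_pos (by omega)]
      simp only [Prod.mk.injEq]
      refine ⟨trivial, by omega, by omega⟩
    · simp only [if_true]
      rw [if_neg (by omega)]
      simp only [Prod.mk.injEq]
      refine ⟨trivial, by omega, by omega⟩
  right_inv := by
    intro p
    dsimp only
    split_ifs with h h2 <;> simp_all [Prod.ext_iff] <;> omega

lemma tsum_split (f : ℤ × ℤ → ℂ) (hf : Summable f) :
    ∑' p : ℤ × ℤ, f p =
      (∑' p : ℤ × ℤ, f (p.1 + p.2, p.1 - p.2)) + ∑' p : ℤ × ℤ, f (p.1 + p.2 + 1, p.1 - p.2) := by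
  have h0 : Summable (fun x : Bool × ℤ × ℤ => f (splitEquiv x)) := (splitEquiv.summable_iff).2 hf
  rw [← splitEquiv.tsum_eq f, h0.tsum_prod' (fun b => h0.prod_factor b), tsum_bool]
  have e1 : ∀ p : ℤ × ℤ, f (splitEquiv (false, p)) = f (p.1 + p.2, p.1 - p.2) := by
    intro p; simp [splitEquiv]
  have e2 : ∀ p : ℤ × ℤ, f (splitEquiv (true, p)) = f (p.1 + p.2 + 1, p.1 - p.2) := by
    intro p; simp [splitEquiv]
  rw [tsum_congr e1, tsum_congr e2]


noncomputable def Fth (q : ℂ) : ℂ := ∑' m : ℤ, q ^ (m * m)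
noncomputable def Gth (q : ℂ) : ℂ := ∑' m : ℤ, q ^ (m * m + m)

lemma Fth_neg (q : ℂ) : Fth (-q) = ∑' m : ℤ, (-1:ℂ) ^ m * q ^ (m * m) :=
  tsum_congr fun m => by rw [neg_base, sign_congr (parity_sq m)]

lemma Fth_negsq (q : ℂ) : Fth (-q ^ 2) = ∑' m : ℤ, (-1:ℂ) ^ m * q ^ (2 * (m * m)) :=
  tsum_congr fun m => by rw [neg_base, sq_base, sign_congr (parity_sq m)]

lemma Fth_sq (q : ℂ) : Fth (q ^ 2) = ∑' m : ℤ, q ^ (2 * (m * m)) :=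
  tsum_congr fun m => by rw [sq_base]

lemma Gth_sq (q : ℂ) : Gth (q ^ 2) = ∑' m : ℤ, q ^ (2 * (m * m) + 2 * m) :=
  tsum_congr fun m => by
    rw [sq_base, show 2 * (m * m + m) = 2 * (m * m) + 2 * m from by ring]

def negOneSub : ℤ ≃ ℤ := ⟨fun m => -m - 1, fun m => -m - 1, fun m => by show -(-m - 1) - 1 = m; ring, fun m => by show -(-m - 1) - 1 = m; ring⟩

lemma Hzero {q : ℂ} (hq0 : q ≠ 0) : (∑' m : ℤ, (-1:ℂ) ^ m * q ^ (2 * (m * m) + 2 * m)) = 0 := by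
  set Ψ : ℤ → ℂ := fun m => (-1:ℂ) ^ m * q ^ (2 * (m * m) + 2 * m) with hΨ
  have h2 : ∀ m : ℤ, Ψ (negOneSub m) = -Ψ m := by
    intro m
    show (-1:ℂ) ^ (-m - 1) * q ^ (2 * ((-m - 1) * (-m - 1)) + 2 * (-m - 1)) = _
    rw [show 2 * ((-m - 1) * (-m - 1)) + 2 * (-m - 1) = 2 * (m * m) + 2 * m from by ring,
      sign_congr (show (-m - 1) % 2 = (m + 1) % 2 from by omega),
      zpow_add₀ (show (-1:ℂ) ≠ 0 from by norm_num), zpow_one]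
    show (-1:ℂ) ^ m * -1 * q ^ (2 * (m * m) + 2 * m) = -((-1:ℂ) ^ m * q ^ (2 * (m * m) + 2 * m))
    ring
  have h3 : ∑' m, Ψ m = -∑' m, Ψ m := by
    conv_lhs => rw [← negOneSub.tsum_eq Ψ]
    rw [tsum_congr h2, tsum_neg]
  have h4 : (2:ℂ) * ∑' m, Ψ m = 0 := by linear_combination h3
  exact (mul_eq_zero.mp h4).resolve_left two_ne_zero

lemma idF {q : ℂ} (hq0 : q ≠ 0) (hq1 : ‖q‖ < 1) : Fth q * Fth (-q) = Fth (-q ^ 2) ^ 2 := by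
  have hn1 : ‖(-1:ℂ)‖ = 1 := by simp
  have Sg : Summable (fun m : ℤ => ‖q ^ (m * m)‖) := by
    have := NS hq0 hq1 1 0 0 le_rfl; simpa using this
  have Sh : Summable (fun m : ℤ => ‖(-1:ℂ) ^ m * q ^ (m * m)‖) := by
    have := NS' hq0 hq1 (-1) hn1 1 0 0 le_rfl; simpa using this
  have SΦ : Summable (fun m : ℤ => ‖(-1:ℂ) ^ m * q ^ (2 * (m * m))‖) := by
    have := NS' hq0 hq1 (-1) hn1 2 0 0 one_le_two; simpa using this
  have SΨ : Summable (fun m : ℤ => ‖(-1:ℂ) ^ m * q ^ (2 * (m * m) + 2 * m)‖) := by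
    have := NS' hq0 hq1 (-1) hn1 2 2 0 one_le_two; simpa using this
  have step1 : Fth q * Fth (-q)
      = ∑' p : ℤ × ℤ, q ^ (p.1 * p.1) * ((-1:ℂ) ^ p.2 * q ^ (p.2 * p.2)) := by
    rw [Fth, Fth_neg]; exact tsum_mul_tsum_of_summable_norm Sg Sh
  have step2 := tsum_split (fun p : ℤ × ℤ => q ^ (p.1 * p.1) * ((-1:ℂ) ^ p.2 * q ^ (p.2 * p.2)))
    ((Sg.mul_norm Sh).of_norm)
  have heven : (∑' p : ℤ × ℤ,
      q ^ ((p.1 + p.2) * (p.1 + p.2)) * ((-1:ℂ) ^ (p.1 - p.2) * q ^ ((p.1 - p.2) * (p.1 - p.2))))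
      = Fth (-q ^ 2) * Fth (-q ^ 2) := by
    rw [Fth_negsq, tsum_mul_tsum_of_summable_norm SΦ SΦ]
    refine tsum_congr fun p => ?_
    obtain ⟨c, d⟩ := p
    show q ^ ((c + d) * (c + d)) * ((-1:ℂ) ^ (c - d) * q ^ ((c - d) * (c - d)))
        = (-1:ℂ) ^ c * q ^ (2 * (c * c)) * ((-1:ℂ) ^ d * q ^ (2 * (d * d)))
    rw [mul_form hq0 c d,
      show q ^ ((c + d) * (c + d)) * ((-1:ℂ) ^ (c - d) * q ^ ((c - d) * (c - d)))
        = (-1:ℂ) ^ (c - d) * q ^ ((c + d) * (c + d) + (c - d) * (c - d)) from by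
          rw [zpow_add₀ hq0]; ring,
      sign_congr (show (c - d) % 2 = (c + d) % 2 from by omega),
      show (c + d) * (c + d) + (c - d) * (c - d) = 2 * (c * c) + 2 * (d * d) from by ring]
  have hodd : (∑' p : ℤ × ℤ,
      q ^ ((p.1 + p.2 + 1) * (p.1 + p.2 + 1)) * ((-1:ℂ) ^ (p.1 - p.2) * q ^ ((p.1 - p.2) * (p.1 - p.2))))
      = 0 := by
    have hpoint : ∀ p : ℤ × ℤ,
        q ^ ((p.1 + p.2 + 1) * (p.1 + p.2 + 1)) * ((-1:ℂ) ^ (p.1 - p.2) * q ^ ((p.1 - p.2) * (p.1 - p.2)))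
        = q * (((-1:ℂ) ^ p.1 * q ^ (2 * (p.1 * p.1) + 2 * p.1)) * ((-1:ℂ) ^ p.2 * q ^ (2 * (p.2 * p.2) + 2 * p.2))) := by
      rintro ⟨c, d⟩
      show q ^ ((c + d + 1) * (c + d + 1)) * ((-1:ℂ) ^ (c - d) * q ^ ((c - d) * (c - d)))
          = q * (((-1:ℂ) ^ c * q ^ (2 * (c * c) + 2 * c)) * ((-1:ℂ) ^ d * q ^ (2 * (d * d) + 2 * d)))
      rw [mul_form hq0 c d,
        show q ^ ((c + d + 1) * (c + d + 1)) * ((-1:ℂ) ^ (c - d) * q ^ ((c - d) * (c - d)))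
          = (-1:ℂ) ^ (c - d) * q ^ ((c + d + 1) * (c + d + 1) + (c - d) * (c - d)) from by
            rw [zpow_add₀ hq0]; ring,
        sign_congr (show (c - d) % 2 = (c + d) % 2 from by omega),
        show (c + d + 1) * (c + d + 1) + (c - d) * (c - d)
          = 1 + (2 * (c * c) + 2 * c + (2 * (d * d) + 2 * d)) from by ring,
        zpow_add₀ hq0, zpow_one]
      ring
    rw [tsum_congr hpoint, tsum_mul_left, ← tsum_mul_tsum_of_summable_norm SΨ SΨ, Hzero hq0]
    ring
  rw [step1, step2]
  beta_reduce
  rw [heven, hodd, add_zero]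
  ring

lemma idG {q : ℂ} (hq0 : q ≠ 0) (hq1 : ‖q‖ < 1) :
    Gth q * Gth q = 2 * (Fth (q ^ 2) * Gth (q ^ 2)) := by
  have Sg : Summable (fun m : ℤ => ‖q ^ (m * m + m)‖) := by
    have := NS hq0 hq1 1 1 0 le_rfl; simpa using this
  have SF2 : Summable (fun m : ℤ => ‖q ^ (2 * (m * m))‖) := by
    have := NS hq0 hq1 2 0 0 one_le_two; simpa using this
  have SG2 : Summable (fun m : ℤ => ‖q ^ (2 * (m * m) + 2 * m)‖) := by
    have := NS hq0 hq1 2 2 0 one_le_two; simpa using this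
  have SG4 : Summable (fun m : ℤ => ‖q ^ (2 * (m * m) + 4 * m + 2)‖) := by
    have := NS hq0 hq1 2 4 2 one_le_two
    apply this.congr; intro m; rw [show 2 * (m * m) + 4 * m + 2 = 2 * (m * m) + 4 * m + 2 from rfl]
  have Fshift : (∑' m : ℤ, q ^ (2 * (m * m) + 4 * m + 2)) = Fth (q ^ 2) := by
    rw [Fth_sq]
    calc ∑' m : ℤ, q ^ (2 * (m * m) + 4 * m + 2)
        = ∑' m : ℤ, (fun k : ℤ => q ^ (2 * (k * k))) (Equiv.addRight (1:ℤ) m) := by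
          refine tsum_congr fun m => ?_
          show _ = q ^ (2 * ((m + 1) * (m + 1)))
          rw [show 2 * (m * m) + 4 * m + 2 = 2 * ((m + 1) * (m + 1)) from by ring]
      _ = ∑' m : ℤ, q ^ (2 * (m * m)) := by exact (Equiv.addRight (1:ℤ)).tsum_eq (fun k : ℤ => q ^ (2 * (k * k)))
  have step1 : Gth q * Gth q
      = ∑' p : ℤ × ℤ, q ^ (p.1 * p.1 + p.1) * q ^ (p.2 * p.2 + p.2) := by
    rw [Gth]; exact tsum_mul_tsum_of_summable_norm Sg Sg
  have step2 := tsum_split (fun p : ℤ × ℤ => q ^ (p.1 * p.1 + p.1) * q ^ (p.2 * p.2 + p.2))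
    ((Sg.mul_norm Sg).of_norm)
  have heven : (∑' p : ℤ × ℤ,
      q ^ ((p.1 + p.2) * (p.1 + p.2) + (p.1 + p.2)) * q ^ ((p.1 - p.2) * (p.1 - p.2) + (p.1 - p.2)))
      = Gth (q ^ 2) * Fth (q ^ 2) := by
    rw [Gth_sq, Fth_sq, tsum_mul_tsum_of_summable_norm SG2 SF2]
    refine tsum_congr fun p => ?_
    obtain ⟨c, d⟩ := p
    show q ^ ((c + d) * (c + d) + (c + d)) * q ^ ((c - d) * (c - d) + (c - d))
        = q ^ (2 * (c * c) + 2 * c) * q ^ (2 * (d * d))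
    rw [← zpow_add₀ hq0, ← zpow_add₀ hq0,
      show (c + d) * (c + d) + (c + d) + ((c - d) * (c - d) + (c - d))
        = 2 * (c * c) + 2 * c + 2 * (d * d) from by ring]
  have hodd : (∑' p : ℤ × ℤ,
      q ^ ((p.1 + p.2 + 1) * (p.1 + p.2 + 1) + (p.1 + p.2 + 1)) * q ^ ((p.1 - p.2) * (p.1 - p.2) + (p.1 - p.2)))
      = Fth (q ^ 2) * Gth (q ^ 2) := by
    rw [← Fshift, Gth_sq, tsum_mul_tsum_of_summable_norm SG4 SG2]
    refine tsum_congr fun p => ?_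
    obtain ⟨c, d⟩ := p
    show q ^ ((c + d + 1) * (c + d + 1) + (c + d + 1)) * q ^ ((c - d) * (c - d) + (c - d))
        = q ^ (2 * (c * c) + 4 * c + 2) * q ^ (2 * (d * d) + 2 * d)
    rw [← zpow_add₀ hq0, ← zpow_add₀ hq0,
      show (c + d + 1) * (c + d + 1) + (c + d + 1) + ((c - d) * (c - d) + (c - d))
        = 2 * (c * c) + 4 * c + 2 + (2 * (d * d) + 2 * d) from by ring]
  rw [step1, step2]
  beta_reduce
  rw [heven, hodd]
  ring


lemma hasSum_major1 {r : ℝ} (h0 : 0 ≤ r) (h1 : r < 1) :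
    HasSum (fun m : ℤ => if m = 0 then (0:ℝ) else r ^ m.natAbs) (r / (1 - r) + r / (1 - r)) := by
  have hgeo : HasSum (fun n : ℕ => r ^ (n + 1)) (r / (1 - r)) := by
    simpa [pow_succ, mul_comm, div_eq_mul_inv] using (hasSum_geometric_of_lt_one h0 h1).mul_left r
  apply HasSum.of_nat_of_neg_add_one
  · refine (hasSum_nat_add_iff' 1).mp ?_
    have hc : ∀ n : ℕ, (if ((n:ℤ) + 1) = 0 then (0:ℝ) else r ^ ((n:ℤ) + 1).natAbs) = r ^ (n + 1) := by
      intro n; rw [if_neg (by omega), show (((n:ℤ) + 1)).natAbs = n + 1 from by omega]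
    simpa [hc] using hgeo
  · have he : ∀ n : ℕ, (fun m : ℤ => if m = 0 then (0:ℝ) else r ^ m.natAbs) (-((n : ℤ) + 1))
        = r ^ (n + 1) := by
      intro n
      dsimp only
      rw [if_neg (by omega), show ((-((n : ℤ) + 1)).natAbs) = n + 1 from by omega]
    exact (funext he : _ = _) ▸ hgeo

lemma hasSum_major2 {r : ℝ} (h0 : 0 ≤ r) (h1 : r < 1) :
    HasSum (fun m : ℤ => if m = -1 then (0:ℝ) else if m = 0 then (0:ℝ) else r ^ m.natAbs)
      (r / (1 - r) + r ^ 2 / (1 - r)) := by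
  have hgeo : HasSum (fun n : ℕ => r ^ (n + 1)) (r / (1 - r)) := by
    simpa [pow_succ, mul_comm, div_eq_mul_inv] using (hasSum_geometric_of_lt_one h0 h1).mul_left r
  have hgeo2 : HasSum (fun n : ℕ => r ^ (n + 2)) (r ^ 2 / (1 - r)) := by
    simpa [pow_add, mul_comm, div_eq_mul_inv] using
      (hasSum_geometric_of_lt_one h0 h1).mul_left (r ^ 2)
  apply HasSum.of_nat_of_neg_add_one
  · refine (hasSum_nat_add_iff' 1).mp ?_
    have : ∀ n : ℕ, (fun m : ℕ => if (m : ℤ) = -1 then (0:ℝ) else if (m : ℤ) = 0 then (0:ℝ)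
        else r ^ (m : ℤ).natAbs) (n + 1) = r ^ (n + 1) := by
      intro n
      dsimp only
      rw [if_neg (by omega), if_neg (by omega),
        show ((((n + 1 : ℕ) : ℤ)).natAbs) = n + 1 from by omega]
    have hc : ∀ n : ℕ, (if ((n:ℤ) + 1) = -1 then (0:ℝ) else if ((n:ℤ) + 1) = 0 then (0:ℝ)
        else r ^ ((n:ℤ) + 1).natAbs) = r ^ (n + 1) := by
      intro n; rw [if_neg (by omega), if_neg (by omega),
        show (((n:ℤ) + 1)).natAbs = n + 1 from by omega]
    simpa [this, hc] using hgeo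
  · refine (hasSum_nat_add_iff' 1).mp ?_
    have he : ∀ n : ℕ, (fun m : ℤ => if m = -1 then (0:ℝ) else if m = 0 then (0:ℝ) else r ^ m.natAbs)
        (-((((n + 1) : ℕ) : ℤ) + 1)) = r ^ (n + 2) := by
      intro n
      dsimp only
      rw [if_neg (by omega), if_neg (by omega),
        show ((-((((n + 1) : ℕ) : ℤ) + 1)).natAbs) = n + 2 from by omega]
    have h00 : (fun m : ℤ => if m = -1 then (0:ℝ) else if m = 0 then (0:ℝ) else r ^ m.natAbs)
        (-(((0 : ℕ) : ℤ) + 1)) = 0 := by norm_num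
    simp only [he]
    rw [show (∑ i ∈ Finset.range 1, (fun n : ℕ =>
      (fun m : ℤ => if m = -1 then (0:ℝ) else if m = 0 then (0:ℝ) else r ^ m.natAbs) (-((n:ℤ) + 1))) i)
      = 0 from by simpa using h00]
    simpa using hgeo2

lemma small_F {q : ℂ} (hq0 : q ≠ 0) (hq3 : ‖q‖ < 1/3) : Fth q ≠ 0 := by
  have hr0 : 0 < ‖q‖ := norm_pos_iff.mpr hq0
  have hr1 : ‖q‖ < 1 := hq3.trans (by norm_num)
  have hsum : Summable (fun m : ℤ => q ^ (m * m)) := by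
    have := (NS hq0 hr1 1 0 0 le_rfl).of_norm
    simpa using this
  have hb : ‖∑' m : ℤ, (if m = 0 then (0:ℂ) else q ^ (m * m))‖
      ≤ ‖q‖ / (1 - ‖q‖) + ‖q‖ / (1 - ‖q‖) := by
    refine tsum_of_norm_bounded (hasSum_major1 hr0.le hr1) fun m => ?_
    by_cases h : m = 0
    · simp [h]
    · rw [if_neg h, if_neg h, norm_zpow]
      calc ‖q‖ ^ (m * m) ≤ ‖q‖ ^ ((m.natAbs : ℤ)) := by
            apply zpow_le_zpow_right_of_le_one₀ hr0 hr1.le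
            rw [show (m.natAbs : ℤ) = |m| from (Int.abs_eq_natAbs m).symm]
            have h2 : |m| * |m| = m * m := abs_mul_abs_self m
            have h3 : 1 ≤ |m| := Int.one_le_abs h
            nlinarith
        _ = ‖q‖ ^ m.natAbs := zpow_natCast _ _
  have hlt : ‖q‖ / (1 - ‖q‖) + ‖q‖ / (1 - ‖q‖) < 1 := by
    have h2 : 0 < 1 - ‖q‖ := by linarith
    rw [← add_div, div_lt_one h2]; linarith
  intro hF
  rw [Fth, hsum.tsum_eq_add_tsum_ite 0] at hF
  rw [show q ^ ((0:ℤ) * 0) = 1 from by norm_num] at hF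
  have hR : (∑' m : ℤ, if m = 0 then (0:ℂ) else q ^ (m * m)) = -1 := by linear_combination hF
  rw [hR] at hb
  simp only [norm_neg, norm_one] at hb
  linarith

lemma small_G {q : ℂ} (hq0 : q ≠ 0) (hq3 : ‖q‖ < 1/3) : Gth q ≠ 0 := by
  have hr0 : 0 < ‖q‖ := norm_pos_iff.mpr hq0
  have hr1 : ‖q‖ < 1 := hq3.trans (by norm_num)
  have hnorm : Summable (fun m : ℤ => ‖q ^ (m * m + m)‖) := by
    have := NS hq0 hr1 1 1 0 le_rfl
    simpa using this
  have hsum : Summable (fun m : ℤ => q ^ (m * m + m)) := hnorm.of_norm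
  have hsum2 : Summable (fun m : ℤ => if m = 0 then (0:ℂ) else q ^ (m * m + m)) := by
    apply Summable.of_norm_bounded hnorm
    intro m
    by_cases h : m = 0 <;> simp [h]
  have hb : ‖∑' m : ℤ, (if m = -1 then (0:ℂ) else if m = 0 then (0:ℂ) else q ^ (m * m + m))‖
      ≤ ‖q‖ / (1 - ‖q‖) + ‖q‖ ^ 2 / (1 - ‖q‖) := by
    refine tsum_of_norm_bounded (hasSum_major2 hr0.le hr1) fun m => ?_
    by_cases h1 : m = -1
    · simp [h1]
    · by_cases h2 : m = 0
      · simp [h1, h2]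
      · rw [if_neg h1, if_neg h2, if_neg h1, if_neg h2, norm_zpow]
        calc ‖q‖ ^ (m * m + m) ≤ ‖q‖ ^ ((m.natAbs : ℤ)) := by
              apply zpow_le_zpow_right_of_le_one₀ hr0 hr1.le
              rw [show (m.natAbs : ℤ) = |m| from (Int.abs_eq_natAbs m).symm]
              have hmm : |m| * |m| = m * m := abs_mul_abs_self m
              rcases le_or_gt 1 m with hc | hc
              · rw [abs_of_nonneg (by omega)]; nlinarith
              · have hm2 : m ≤ -2 := by omega
                rw [abs_of_nonpos (by omega)]; nlinarith
          _ = ‖q‖ ^ m.natAbs := zpow_natCast _ _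
  have hlt : ‖q‖ / (1 - ‖q‖) + ‖q‖ ^ 2 / (1 - ‖q‖) < 2 := by
    have h2 : 0 < 1 - ‖q‖ := by linarith
    rw [← add_div, div_lt_iff₀ h2]
    nlinarith
  intro hG
  rw [Gth, hsum.tsum_eq_add_tsum_ite 0] at hG
  rw [hsum2.tsum_eq_add_tsum_ite (-1)] at hG
  rw [show q ^ ((0:ℤ) * 0 + 0) = 1 from by norm_num] at hG
  rw [show (if (-1 : ℤ) = 0 then (0:ℂ) else q ^ ((-1:ℤ) * (-1) + (-1))) = 1 from by norm_num] at hG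
  have hR : (∑' m : ℤ, if m = -1 then (0:ℂ) else if m = 0 then (0:ℂ) else q ^ (m * m + m)) = -2 := by
    linear_combination hG
  rw [hR] at hb
  rw [show ‖(-2 : ℂ)‖ = 2 from by norm_num] at hb
  linarith

lemma F_ne {q : ℂ} (hq0 : q ≠ 0) (hq1 : ‖q‖ < 1) : Fth q ≠ 0 := by
  suffices H : ∀ k : ℕ, ∀ w : ℂ, w ≠ 0 → ‖w‖ < 1 → ‖w‖ ^ (2 ^ k) < 1/3 → Fth w ≠ 0 by
    obtain ⟨N, hN⟩ := exists_pow_lt_of_lt_one (show (0:ℝ) < 1/3 by norm_num) hq1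
    refine H N q hq0 hq1 ?_
    calc ‖q‖ ^ (2 ^ N) ≤ ‖q‖ ^ N :=
          pow_le_pow_of_le_one (norm_nonneg q) hq1.le (Nat.lt_two_pow_self (n := N)).le
      _ < 1/3 := hN
  intro k
  induction k with
  | zero => intro w h0 h1 h3; exact small_F h0 (by simpa using h3)
  | succ k ih =>
    intro w h0 h1 h3
    have hw0 : (-w ^ 2 : ℂ) ≠ 0 := by simpa using pow_ne_zero 2 h0
    have hnrm : ‖(-w ^ 2 : ℂ)‖ = ‖w‖ ^ 2 := by rw [norm_neg, norm_pow]
    have hw1 : ‖(-w ^ 2 : ℂ)‖ < 1 := by rw [hnrm]; nlinarith [norm_nonneg w]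
    have hw3 : ‖(-w ^ 2 : ℂ)‖ ^ (2 ^ k) < 1/3 := by
      rw [hnrm, ← pow_mul, show 2 * 2 ^ k = 2 ^ (k + 1) from by rw [pow_succ]; ring]
      exact h3
    have hF2 := ih (-w ^ 2) hw0 hw1 hw3
    intro hcon
    apply hF2
    have hid := idF h0 h1
    rw [hcon, zero_mul] at hid
    exact (pow_eq_zero_iff (two_ne_zero)).mp hid.symm
  
lemma G_ne {q : ℂ} (hq0 : q ≠ 0) (hq1 : ‖q‖ < 1) : Gth q ≠ 0 := by
  suffices H : ∀ k : ℕ, ∀ w : ℂ, w ≠ 0 → ‖w‖ < 1 → ‖w‖ ^ (2 ^ k) < 1/3 → Gth w ≠ 0 by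
    obtain ⟨N, hN⟩ := exists_pow_lt_of_lt_one (show (0:ℝ) < 1/3 by norm_num) hq1
    refine H N q hq0 hq1 ?_
    calc ‖q‖ ^ (2 ^ N) ≤ ‖q‖ ^ N :=
          pow_le_pow_of_le_one (norm_nonneg q) hq1.le (Nat.lt_two_pow_self (n := N)).le
      _ < 1/3 := hN
  intro k
  induction k with
  | zero => intro w h0 h1 h3; exact small_G h0 (by simpa using h3)
  | succ k ih =>
    intro w h0 h1 h3
    have hw0 : (w ^ 2 : ℂ) ≠ 0 := pow_ne_zero 2 h0
    have hnrm : ‖(w ^ 2 : ℂ)‖ = ‖w‖ ^ 2 := norm_pow w 2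
    have hw1 : ‖(w ^ 2 : ℂ)‖ < 1 := by rw [hnrm]; nlinarith [norm_nonneg w]
    have hw3 : ‖(w ^ 2 : ℂ)‖ ^ (2 ^ k) < 1/3 := by
      rw [hnrm, ← pow_mul, show 2 * 2 ^ k = 2 ^ (k + 1) from by rw [pow_succ]; ring]
      exact h3
    have hG2 := ih (w ^ 2) hw0 hw1 hw3
    have hF2 : Fth (w ^ 2) ≠ 0 := F_ne hw0 hw1
    intro hcon
    have hid := idG h0 h1
    rw [hcon, zero_mul] at hid
    exact (mul_ne_zero two_ne_zero (mul_ne_zero hF2 hG2)) hid.symm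


def pairEquiv (n : ℤ) : ℤ ≃ {f : Fin 2 → ℤ // ∑ i, f i = n} where
  toFun m := ⟨![m, n - m], by simp [Fin.sum_univ_two]⟩
  invFun f := f.1 0
  left_inv m := by simp
  right_inv f := by
    obtain ⟨f, hf⟩ := f
    rw [Fin.sum_univ_two] at hf
    apply Subtype.ext
    funext i
    fin_cases i
    · simp
    · show (![f 0, n - f 0]) 1 = f 1
      rw [show (![f 0, n - f 0]) 1 = n - f 0 from rfl]
      omega


end ThetaProof

open ThetaProof in
/-- The `n`-th Laurent coefficient of `θ_q(x)^2` equals `q^{n(n-1)/2} ⬝ θ_{q²}(q^{1-n})`,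
and this coefficient is nonzero. -/
theorem stmt0 (q : ℂ) (hq0 : 0 < ‖q‖) (hq1 : ‖q‖ < 1) (n : ℤ) :
    gammaCoeff 2 n q = q ^ (n * (n - 1) / 2).toNat * theta (q ^ 2) (q ^ (1 - n)) ∧
    gammaCoeff 2 n q ≠ 0 := by
  have hq0' : q ≠ 0 := norm_pos_iff.mp hq0
  have hq1' : ‖q‖ < 1 := hq1
  obtain ⟨t, ht⟩ := Int.even_mul_pred_self n
  have ht0 : 0 ≤ t := by have := mul_pred_nonneg n; omega
  have key : gammaCoeff 2 n q = ∑' m : ℤ, q ^ (m * m - n * m + t) := by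
    rw [gammaCoeff, ← (pairEquiv n).tsum_eq]
    refine tsum_congr fun m => ?_
    have hval : (∑ i, ((pairEquiv n) m).1 i * (((pairEquiv n) m).1 i - 1))
        = m * (m - 1) + (n - m) * ((n - m) - 1) := by
      rw [Fin.sum_univ_two]; rfl
    rw [hval]
    have h1 : m * (m - 1) + (n - m) * ((n - m) - 1) = 2 * (m * m - n * m + t) := by
      linear_combination ht
    have hE : (m * (m - 1) + (n - m) * ((n - m) - 1)) / 2 = m * m - n * m + t := by
      rw [h1, Int.mul_ediv_cancel_left _ (by norm_num)]
    rw [hE]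
    have hX0 : 0 ≤ m * m - n * m + t := by
      have h2 := mul_pred_nonneg m
      have h3 := mul_pred_nonneg (n - m)
      nlinarith
    rw [← zpow_natCast q (m * m - n * m + t).toNat, Int.toNat_of_nonneg hX0]
  have hKt : n * (n - 1) / 2 = t := by omega
  constructor
  · rw [key]
    have hth : theta (q ^ 2) (q ^ (1 - n)) = ∑' m : ℤ, q ^ (m * (m - 1) + (1 - n) * m) := by
      rw [theta]
      refine tsum_congr fun m => ?_
      have hdvd : (2 : ℤ) ∣ m * (m - 1) := (Int.even_mul_pred_self m).two_dvd
      have hs0 : 0 ≤ m * (m - 1) / 2 := Int.ediv_nonneg (mul_pred_nonneg m) (by norm_num)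
      rw [← zpow_natCast (q ^ 2) (m * (m - 1) / 2).toNat, Int.toNat_of_nonneg hs0, sq_base,
        Int.mul_ediv_cancel' hdvd, ← zpow_mul, ← zpow_add₀ hq0']
    rw [hth, hKt, ← zpow_natCast q t.toNat, Int.toNat_of_nonneg ht0, ← tsum_mul_left]
    refine tsum_congr fun m => ?_
    rw [← zpow_add₀ hq0', show t + (m * (m - 1) + (1 - n) * m) = m * m - n * m + t from by ring]
  · rw [key]
    have split : (∑' m : ℤ, q ^ (m * m - n * m + t))
        = (∑' m : ℤ, q ^ (m * m - n * m)) * q ^ t := by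
      rw [← tsum_mul_right]
      exact tsum_congr fun m => by rw [← zpow_add₀ hq0']
    rw [split]
    apply mul_ne_zero _ (zpow_ne_zero _ hq0')
    rcases Int.even_or_odd n with ⟨s, hs⟩ | ⟨s, hs⟩
    · rw [← (Equiv.addRight s).tsum_eq (fun m : ℤ => q ^ (m * m - n * m))]
      have hpt : ∀ m : ℤ, (fun m : ℤ => q ^ (m * m - n * m)) ((Equiv.addRight s) m)
          = q ^ (m * m) * q ^ (-(s * s)) := by
        intro m
        show q ^ ((m + s) * (m + s) - n * (m + s)) = _
        rw [← zpow_add₀ hq0',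
          show (m + s) * (m + s) - n * (m + s) = m * m + -(s * s) from by rw [hs]; ring]
      rw [tsum_congr hpt, tsum_mul_right]
      exact mul_ne_zero (F_ne hq0' hq1') (zpow_ne_zero _ hq0')
    · rw [← (Equiv.addRight s).tsum_eq (fun m : ℤ => q ^ (m * m - n * m))]
      have hpt : ∀ m : ℤ, (fun m : ℤ => q ^ (m * m - n * m)) ((Equiv.addRight s) m)
          = q ^ (m * m - m) * q ^ (-(s * s + s)) := by
        intro m
        show q ^ ((m + s) * (m + s) - n * (m + s)) = _
        rw [← zpow_add₀ hq0',
          show (m + s) * (m + s) - n * (m + s) = m * m - m + -(s * s + s) from by rw [hs]; ring]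
      rw [tsum_congr hpt, tsum_mul_right]
      apply mul_ne_zero _ (zpow_ne_zero _ hq0')
      have hGeq : Gth q = ∑' m : ℤ, q ^ (m * m - m) := by
        rw [Gth]
        calc ∑' m : ℤ, q ^ (m * m + m)
            = ∑' m : ℤ, (fun k : ℤ => q ^ (k * k - k)) ((Equiv.neg ℤ) m) := by
              refine tsum_congr fun m => ?_
              show _ = q ^ ((-m) * (-m) - (-m))
              rw [show (-m) * (-m) - (-m) = m * m + m from by ring]
          _ = ∑' m : ℤ, q ^ (m * m - m) := by
              exact (Equiv.neg ℤ).tsum_eq (fun k : ℤ => q ^ (k * k - k))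
      rw [← hGeq]
      exact G_ne hq0' hq1'
end

section
/- For 0 < |q| < 1 and all x ≠ 0, one has θ_q(x)² = θ_{q²}(q)·θ_{q²}(x²) + x·θ_{q²}(1)·θ_{q²}(q x²). -/
open Filter Complex

namespace ThetaAux

/-- The exponent `m(m-1)/2`. -/
def T (m : ℤ) : ℤ := m * (m - 1) / 2

lemma T_nonneg (m : ℤ) : 0 ≤ T m := by
  have h : 0 ≤ m * (m - 1) := by
    rcases le_or_gt m 0 with h | h
    · have h2 : 0 ≤ (-m) * (1 - m) := mul_nonneg (by omega) (by omega)
      nlinarith [h2]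
    · exact mul_nonneg (by omega) (by omega)
  exact Int.ediv_nonneg h (by norm_num)

lemma two_T (m : ℤ) : 2 * T m = m * (m - 1) := by
  have h : Even (m * (m - 1)) := by
    have h0 := Int.even_mul_succ_self (m - 1)
    have : m - 1 + 1 = m := by ring
    rw [this] at h0
    rw [mul_comm]
    exact h0
  obtain ⟨k, hk⟩ := h
  rw [T, hk]
  omega

lemma T_succ (m : ℤ) : T (m + 1) = T m + m := by
  have h1 := two_T (m + 1); have h2 := two_T m
  nlinarith [h1, h2]

lemma T_pred (m : ℤ) : T (m - 1) = T m - (m - 1) := by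
  have h1 := two_T (m - 1); have h2 := two_T m
  nlinarith [h1, h2]

/-- zpow version of the theta summand. -/
noncomputable def F (q x : ℂ) (m : ℤ) : ℂ := q ^ T m * x ^ m

lemma F_eq (q x : ℂ) (m : ℤ) : q ^ (m * (m - 1) / 2).toNat * x ^ m = F q x m := by
  have : ((m * (m - 1) / 2).toNat : ℤ) = T m := Int.toNat_of_nonneg (T_nonneg m)
  rw [F, ← this, zpow_natCast]

lemma theta_eq (q x : ℂ) : theta q x = ∑' m : ℤ, F q x m :=
  tsum_congr fun m => F_eq q x m

lemma F_add_one {q x : ℂ} (hq : q ≠ 0) (hx : x ≠ 0) (m : ℤ) :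
    F q x (m + 1) = (q ^ m * x) * F q x m := by
  rw [F, F, T_succ, zpow_add₀ hq, zpow_add_one₀ hx]
  ring

lemma F_sub_one {q x : ℂ} (hq : q ≠ 0) (hx : x ≠ 0) (m : ℤ) :
    F q x (m - 1) = (q ^ (1 - m) * x⁻¹) * F q x m := by
  rw [F, F, T_pred, zpow_sub_one₀ hx, show T m - (m - 1) = T m + (1 - m) by ring,
    zpow_add₀ hq]
  ring

/-- Ratio test helper. -/
lemma summable_norm_of_ratio {f g : ℕ → ℂ} (hfg : ∀ n, f (n + 1) = g n * f n)
    (hg : Tendsto (fun n => ‖g n‖) atTop (nhds 0)) : Summable fun n => ‖f n‖ := by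
  apply summable_of_ratio_norm_eventually_le (r := 1 / 2) (by norm_num)
  have hev : ∀ᶠ n in atTop, ‖g n‖ < 1 / 2 :=
    hg.eventually_lt_const (by norm_num)
  filter_upwards [hev] with n hn
  rw [norm_norm, norm_norm, hfg n, norm_mul]
  exact mul_le_mul_of_nonneg_right hn.le (norm_nonneg _)

lemma summable_norm_F {q x : ℂ} (hq : q ≠ 0) (hq1 : ‖q‖ < 1) (hx : x ≠ 0) :
    Summable fun m : ℤ => ‖F q x m‖ := by
  have hq1' : ‖q‖ < 1 := hq1
  have hpow : Tendsto (fun n : ℕ => ‖q‖ ^ n) atTop (nhds 0) :=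
    tendsto_pow_atTop_nhds_zero_of_lt_one (norm_nonneg q) hq1'
  apply Summable.of_nat_of_neg_add_one
  · apply summable_norm_of_ratio (g := fun n : ℕ => q ^ (n : ℤ) * x)
    · intro n
      have : ((n : ℤ) + 1) = ((n + 1 : ℕ) : ℤ) := by push_cast; ring
      rw [← this, F_add_one hq hx]
    · have : (fun n : ℕ => ‖q ^ (n : ℤ) * x‖) = fun n : ℕ => ‖q‖ ^ n * ‖x‖ := by
        funext n; rw [norm_mul, norm_zpow, zpow_natCast]
      rw [this]
      simpa using hpow.mul_const ‖x‖
  · apply summable_norm_of_ratio (g := fun n : ℕ => q ^ ((n : ℤ) + 2) * x⁻¹)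
    · intro n
      have h1 : (-(((n + 1 : ℕ) : ℤ) + 1)) = -((n : ℤ) + 1) - 1 := by push_cast; ring
      have h2 : (1 : ℤ) - (-((n : ℤ) + 1)) = (n : ℤ) + 2 := by ring
      rw [h1, F_sub_one hq hx, h2]
    · have : (fun n : ℕ => ‖q ^ ((n : ℤ) + 2) * x⁻¹‖)
          = fun n : ℕ => ‖q‖ ^ n * (‖q‖ ^ (2 : ℤ) * ‖x⁻¹‖) := by
        funext n
        rw [norm_mul, zpow_add₀ hq, norm_mul, norm_zpow, norm_zpow, zpow_natCast, mul_assoc]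
      rw [this]
      simpa using hpow.mul_const (‖q‖ ^ (2 : ℤ) * ‖x⁻¹‖)

lemma hasSum_theta {q x : ℂ} (hq : q ≠ 0) (hq1 : ‖q‖ < 1) (hx : x ≠ 0) :
    HasSum (F q x) (theta q x) := by
  rw [theta_eq]
  exact ((summable_norm_F hq hq1 hx).of_norm).hasSum

end ThetaAux

open ThetaAux in
/-- `θ_q(x)² = θ_{q²}(q)·θ_{q²}(x²) + x·θ_{q²}(1)·θ_{q²}(q x²)`. -/
theorem stmt1 (q : ℂ) (hq0 : 0 < ‖q‖) (hq1 : ‖q‖ < 1)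
    (x : ℂ) (hx : x ≠ 0) :
    theta q x ^ 2 =
      theta (q ^ 2) q * theta (q ^ 2) (x ^ 2) +
        x * theta (q ^ 2) 1 * theta (q ^ 2) (q * x ^ 2) := by
  classical
  have hq : q ≠ 0 := by
    intro h; rw [h] at hq0; simp at hq0
  have hq2 : (q ^ 2 : ℂ) ≠ 0 := pow_ne_zero _ hq
  have habs2 : ‖q ^ 2‖ < 1 := by
    rw [norm_pow]
    exact pow_lt_one₀ (norm_nonneg q) hq1 (by norm_num)
  have hx2 : (x ^ 2 : ℂ) ≠ 0 := pow_ne_zero _ hx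
  have hqx2 : (q * x ^ 2 : ℂ) ≠ 0 := mul_ne_zero hq hx2
  -- basic HasSum facts
  have Hqx := hasSum_theta hq hq1 hx
  have HA := hasSum_theta hq2 habs2 hq
  have HB := hasSum_theta hq2 habs2 hx2
  have HC := hasSum_theta hq2 habs2 (one_ne_zero (α := ℂ))
  have HD := hasSum_theta hq2 habs2 hqx2
  have nqx := summable_norm_F hq hq1 hx
  have nA := summable_norm_F hq2 habs2 hq
  have nB := summable_norm_F hq2 habs2 hx2
  have nC := summable_norm_F hq2 habs2 (one_ne_zero (α := ℂ))
  have nD := summable_norm_F hq2 habs2 hqx2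
  set f : ℤ × ℤ → ℂ := fun p => F q x p.1 * F q x p.2 with hfdef
  have Hsq : HasSum f (theta q x * theta q x) :=
    Hqx.mul Hqx (summable_mul_of_summable_norm nqx nqx)
  have HAB : HasSum (fun p : ℤ × ℤ => F (q ^ 2) q p.1 * F (q ^ 2) (x ^ 2) p.2)
      (theta (q ^ 2) q * theta (q ^ 2) (x ^ 2)) :=
    HA.mul HB (summable_mul_of_summable_norm nA nB)
  have HCD : HasSum (fun p : ℤ × ℤ => x * (F (q ^ 2) 1 p.1 * F (q ^ 2) (q * x ^ 2) p.2))
      (x * (theta (q ^ 2) 1 * theta (q ^ 2) (q * x ^ 2))) :=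
    (HC.mul HD (summable_mul_of_summable_norm nC nD)).mul_left x
  -- the two injections
  set i₁ : ℤ × ℤ → ℤ × ℤ := fun p => (p.1 + p.2, p.2 - p.1) with hi1
  set i₂ : ℤ × ℤ → ℤ × ℤ := fun p => (p.2 + p.1, p.2 - p.1 + 1) with hi2
  have inj1 : Function.Injective i₁ := by
    intro a b h
    simp only [hi1, Prod.ext_iff] at h ⊢
    omega
  have inj2 : Function.Injective i₂ := by
    intro a b h
    simp only [hi2, Prod.ext_iff] at h ⊢
    omega
  have r1 : Set.range i₁ = {p : ℤ × ℤ | Even (p.1 + p.2)} := by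
    ext p
    constructor
    · rintro ⟨a, rfl⟩
      exact ⟨a.2, by simp [hi1]; ring⟩
    · rintro ⟨k, hk⟩
      exact ⟨(p.1 - k, k), by simp only [hi1, Prod.ext_iff]; constructor <;> omega⟩
  have r2 : Set.range i₂ = {p : ℤ × ℤ | Even (p.1 + p.2)}ᶜ := by
    ext p
    constructor
    · rintro ⟨a, rfl⟩
      simp only [Set.mem_compl_iff, Set.mem_setOf_eq, hi2, Int.not_even_iff_odd]
      exact ⟨a.2, by ring⟩
    · intro hp
      rw [Set.mem_compl_iff, Set.mem_setOf_eq, Int.not_even_iff_odd] at hp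
      obtain ⟨k, hk⟩ := hp
      exact ⟨(p.1 - k, k), by simp only [hi2, Prod.ext_iff]; constructor <;> omega⟩
  -- pointwise identities
  have hq2z : ((q : ℂ) ^ 2) = q ^ (2 : ℤ) := by
    rw [← zpow_natCast q 2]; norm_num
  have hx2z : ((x : ℂ) ^ 2) = x ^ (2 : ℤ) := by
    rw [← zpow_natCast x 2]; norm_num
  have key1 : ∀ p : ℤ × ℤ, f (i₁ p) = F (q ^ 2) q p.1 * F (q ^ 2) (x ^ 2) p.2 := by
    rintro ⟨b, a⟩
    simp only [hfdef, hi1, F]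
    have ex1 : T (b + a) + T (a - b) = 2 * T b + b + 2 * T a := by
      nlinarith [two_T (b + a), two_T (a - b), two_T a, two_T b]
    have ex2 : (b + a) + (a - b) = 2 * a := by ring
    rw [hq2z, hx2z, ← zpow_mul, ← zpow_mul, ← zpow_mul]
    calc q ^ T (b + a) * x ^ (b + a) * (q ^ T (a - b) * x ^ (a - b))
        = (q ^ T (b + a) * q ^ T (a - b)) * (x ^ (b + a) * x ^ (a - b)) := by ring
      _ = q ^ (T (b + a) + T (a - b)) * x ^ ((b + a) + (a - b)) := by
          rw [← zpow_add₀ hq, ← zpow_add₀ hx]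
      _ = q ^ (2 * T b + b + 2 * T a) * x ^ (2 * a) := by rw [ex1, ex2]
      _ = (q ^ (2 * T b) * q ^ b * q ^ (2 * T a)) * x ^ (2 * a) := by
          rw [← zpow_add₀ hq, ← zpow_add₀ hq]
      _ = q ^ (2 * T b) * q ^ b * (q ^ (2 * T a) * x ^ (2 * a)) := by ring
  have key2 : ∀ p : ℤ × ℤ,
      f (i₂ p) = x * (F (q ^ 2) 1 p.1 * F (q ^ 2) (q * x ^ 2) p.2) := by
    rintro ⟨b, a⟩
    simp only [hfdef, hi2, F]
    have ex1 : T (a + b) + T (a - b + 1) = 2 * T b + 2 * T a + a := by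
      nlinarith [two_T (a + b), two_T (a - b + 1), two_T a, two_T b]
    have ex2 : (a + b) + (a - b + 1) = 1 + 2 * a := by ring
    rw [hq2z, hx2z, ← zpow_mul, ← zpow_mul, one_zpow, mul_zpow, ← zpow_mul]
    calc q ^ T (a + b) * x ^ (a + b) * (q ^ T (a - b + 1) * x ^ (a - b + 1))
        = (q ^ T (a + b) * q ^ T (a - b + 1)) * (x ^ (a + b) * x ^ (a - b + 1)) := by ring
      _ = q ^ (T (a + b) + T (a - b + 1)) * x ^ ((a + b) + (a - b + 1)) := by
          rw [← zpow_add₀ hq, ← zpow_add₀ hx]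
      _ = q ^ (2 * T b + 2 * T a + a) * x ^ (1 + 2 * a) := by rw [ex1, ex2]
      _ = (q ^ (2 * T b) * q ^ (2 * T a) * q ^ a) * (x ^ (1 : ℤ) * x ^ (2 * a)) := by
          rw [← zpow_add₀ hq, ← zpow_add₀ hq, ← zpow_add₀ hx]
      _ = x * (q ^ (2 * T b) * 1 * (q ^ (2 * T a) * (q ^ a * x ^ (2 * a)))) := by
          rw [zpow_one]; ring
  -- assemble
  have part1 : HasSum (f ∘ ((↑) : {p : ℤ × ℤ | Even (p.1 + p.2)} → ℤ × ℤ))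
      (theta (q ^ 2) q * theta (q ^ 2) (x ^ 2)) := by
    rw [← r1]
    apply inj1.hasSum_range_iff.mpr
    have : f ∘ i₁ = fun p => F (q ^ 2) q p.1 * F (q ^ 2) (x ^ 2) p.2 := funext key1
    rw [this]
    exact HAB
  have part2 : HasSum (f ∘ ((↑) : ({p : ℤ × ℤ | Even (p.1 + p.2)}ᶜ : Set (ℤ × ℤ)) → ℤ × ℤ))
      (x * (theta (q ^ 2) 1 * theta (q ^ 2) (q * x ^ 2))) := by
    rw [← r2]
    apply inj2.hasSum_range_iff.mpr
    have : f ∘ i₂ = fun p => x * (F (q ^ 2) 1 p.1 * F (q ^ 2) (q * x ^ 2) p.2) := funext key2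
    rw [this]
    exact HCD
  have Htotal : HasSum f (theta (q ^ 2) q * theta (q ^ 2) (x ^ 2) +
      x * (theta (q ^ 2) 1 * theta (q ^ 2) (q * x ^ 2))) :=
    part1.add_isCompl isCompl_compl part2
  have final := Hsq.unique Htotal
  rw [sq, final]
  ring
end

section
/- For 0 < |q| < 1 and k ≥ 1, one has θ_q(x)^k = ∑_{i=0}^{k-1} γ_{k,i}(q) · x^i · θ_{q^k}(q^i x^k) for all x ≠ 0, where γ_{k,i}(q) is the coefficient of x^i in the Laurent expansion of θ_q^k. -/
open Complex Finset

lemma even_mul_pred (m : ℤ) : Even (m * (m - 1)) := by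
  have := Int.even_mul_succ_self (m - 1)
  have h : (m - 1) * (m - 1 + 1) = m * (m - 1) := by ring
  rwa [h] at this

lemma nonneg_mul_pred (m : ℤ) : 0 ≤ m * (m - 1) := by
  rcases le_or_gt m 0 with h | h
  · nlinarith
  · nlinarith

lemma zpow_toNat (q : ℂ) (a : ℤ) (ha : 0 ≤ a) : q ^ a.toNat = q ^ a := by
  rw [← zpow_natCast, Int.toNat_of_nonneg ha]

noncomputable def thTerm (q x : ℂ) (m : ℤ) : ℂ := q ^ (m * (m - 1) / 2).toNat * x ^ m

lemma norm_thTerm (q x : ℂ) (m : ℤ) :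
    ‖thTerm q x m‖ = ‖q‖ ^ (m * (m - 1) / 2).toNat * ‖x‖ ^ m := by
  rw [thTerm, norm_mul, norm_pow, norm_zpow]

lemma thTerm_ne_zero {q x : ℂ} (hq0 : q ≠ 0) (hx : x ≠ 0) (m : ℤ) : thTerm q x m ≠ 0 :=
  mul_ne_zero (pow_ne_zero _ hq0) (zpow_ne_zero _ hx)

lemma summable_norm_thTerm {q x : ℂ} (hq1 : ‖q‖ < 1) (hq0 : q ≠ 0) (hx : x ≠ 0) :
    Summable fun m : ℤ => ‖thTerm q x m‖ := by
  rw [summable_norm_iff]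
  apply Summable.of_nat_of_neg
  · apply summable_of_ratio_test_tendsto_lt_one (l := 0) one_pos
    · filter_upwards with n; exact thTerm_ne_zero hq0 hx n
    · have key : ∀ n : ℕ, ‖thTerm q x (n + 1)‖ / ‖thTerm q x n‖ = ‖q‖ ^ n * ‖x‖ := by
        intro n
        have hT : ((((n : ℤ) + 1) * ((n : ℤ) + 1 - 1)) / 2).toNat
            = (((n : ℤ) * ((n : ℤ) - 1)) / 2).toNat + n := by
          have h : ((n : ℤ) + 1) * ((n : ℤ) + 1 - 1) = (n : ℤ) * ((n : ℤ) - 1) + 2 * n := by ring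
          have h2 := nonneg_mul_pred (n : ℤ)
          omega
        have key1 : ‖thTerm q x ((n : ℤ) + 1)‖ = ‖thTerm q x n‖ * (‖q‖ ^ n * ‖x‖) := by
          rw [norm_thTerm, norm_thTerm, hT, pow_add, zpow_add_one₀ (by simpa using hx)]
          ring
        rw [key1, mul_div_cancel_left₀ _ (by simpa [norm_eq_zero] using thTerm_ne_zero hq0 hx (n : ℤ))]
      have h0 : Filter.Tendsto (fun n : ℕ => ‖q‖ ^ n * ‖x‖) Filter.atTop (nhds (0 * ‖x‖)) :=
        (tendsto_pow_atTop_nhds_zero_of_lt_one (norm_nonneg q) (by simpa using hq1)).mul_const _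
      rw [zero_mul] at h0
      refine h0.congr fun n => ?_
      push_cast
      exact (key n).symm
  · apply summable_of_ratio_test_tendsto_lt_one (l := 0) one_pos
    · filter_upwards with n; exact thTerm_ne_zero hq0 hx _
    · have key : ∀ n : ℕ, ‖thTerm q x (-((n : ℤ) + 1))‖ / ‖thTerm q x (-(n : ℤ))‖
          = ‖q‖ ^ (n + 1) * ‖x‖⁻¹ := by
        intro n
        have hT : (((-((n : ℤ) + 1)) * ((-((n : ℤ) + 1)) - 1)) / 2).toNat
            = (((-(n : ℤ)) * ((-(n : ℤ)) - 1)) / 2).toNat + (n + 1) := by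
          have h : (-((n : ℤ) + 1)) * ((-((n : ℤ) + 1)) - 1)
              = (-(n : ℤ)) * ((-(n : ℤ)) - 1) + 2 * (n + 1) := by ring
          have h2 := nonneg_mul_pred (-(n : ℤ))
          omega
        have key1 : ‖thTerm q x (-((n : ℤ) + 1))‖
            = ‖thTerm q x (-(n : ℤ))‖ * (‖q‖ ^ (n + 1) * ‖x‖⁻¹) := by
          rw [norm_thTerm, norm_thTerm, hT, pow_add,
            show (-((n : ℤ) + 1)) = -(n : ℤ) - 1 by ring,
            zpow_sub_one₀ (by simpa using hx)]
          ring
        rw [key1, mul_div_cancel_left₀ _ (by simpa [norm_eq_zero] using thTerm_ne_zero hq0 hx (-(n : ℤ)))]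
      have h0 : Filter.Tendsto (fun n : ℕ => ‖q‖ ^ (n + 1) * ‖x‖⁻¹) Filter.atTop
          (nhds (0 * ‖x‖⁻¹)) := by
        refine Filter.Tendsto.mul_const _ ?_
        exact ((tendsto_pow_atTop_nhds_zero_of_lt_one (norm_nonneg q)
          (by simpa using hq1)).comp (Filter.tendsto_add_atTop_nat 1))
      rw [zero_mul] at h0
      refine h0.congr fun n => ?_
      rw [← key n]
      push_cast
      ring_nf

noncomputable def prodTerm (q x : ℂ) (k : ℕ) (f : Fin k → ℤ) : ℂ := ∏ j, thTerm q x (f j)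

lemma prod_zpow₀ {α : Type*} {q : ℂ} (hq : q ≠ 0) (s : Finset α) (e : α → ℤ) :
    ∏ a ∈ s, q ^ e a = q ^ (∑ a ∈ s, e a) := by
  induction s using Finset.cons_induction with
  | empty => simp
  | cons a s ha ih => rw [Finset.prod_cons, Finset.sum_cons, ih, zpow_add₀ hq]

lemma sum_mul_pred_nonneg {k : ℕ} (f : Fin k → ℤ) : 0 ≤ ∑ j, f j * (f j - 1) :=
  Finset.sum_nonneg fun j _ => nonneg_mul_pred (f j)

lemma sum_mul_pred_even {k : ℕ} (f : Fin k → ℤ) :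
    ∑ j, f j * (f j - 1) = 2 * ∑ j, (f j * (f j - 1) / 2) := by
  rw [Finset.mul_sum]
  exact Finset.sum_congr rfl fun j _ => (Int.two_mul_ediv_two_of_even (even_mul_pred _)).symm

lemma prodTerm_eq {q x : ℂ} (hq0 : q ≠ 0) (hx : x ≠ 0) {k : ℕ} (f : Fin k → ℤ) :
    prodTerm q x k f = q ^ ((∑ j, f j * (f j - 1)) / 2) * x ^ (∑ j, f j) := by
  have h1 : ∀ j : Fin k, thTerm q x (f j) = q ^ (f j * (f j - 1) / 2) * x ^ (f j) := by
    intro j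
    rw [thTerm, zpow_toNat q _ (Int.ediv_nonneg (nonneg_mul_pred _) (by norm_num))]
  rw [prodTerm]
  simp_rw [h1]
  rw [Finset.prod_mul_distrib, prod_zpow₀ hq0, prod_zpow₀ hx]
  congr 2
  rw [sum_mul_pred_even f, Int.mul_ediv_cancel_left _ two_ne_zero]

lemma summable_norm_prodTerm {q x : ℂ} (hq1 : ‖q‖ < 1) (hq0 : q ≠ 0) (hx : x ≠ 0)
    (k : ℕ) : Summable fun f : Fin k → ℤ => ‖prodTerm q x k f‖ := by
  induction k with
  | zero =>
    exact Summable.of_finite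
  | succ k ih =>
    refine (Equiv.summable_iff (Fin.consEquiv (fun _ : Fin (k + 1) => ℤ))).mp ?_
    refine ((summable_norm_thTerm hq1 hq0 hx).mul_norm ih).congr fun p => ?_
    simp only [Function.comp_apply, Fin.consEquiv_apply, prodTerm]
    rw [Fin.prod_univ_succ]
    simp [Fin.cons_zero, Fin.cons_succ]

lemma theta_pow {q x : ℂ} (hq1 : ‖q‖ < 1) (hq0 : q ≠ 0) (hx : x ≠ 0) (k : ℕ) :
    theta q x ^ k = ∑' f : Fin k → ℤ, prodTerm q x k f := by
  induction k with
  | zero =>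
    rw [pow_zero, tsum_eq_single (fun i => i.elim0) (fun b hb => absurd (Subsingleton.elim b _) hb)]
    simp [prodTerm]
  | succ k ih =>
    rw [pow_succ', ih]
    have hth : theta q x = ∑' m : ℤ, thTerm q x m := rfl
    rw [hth, tsum_mul_tsum_of_summable_norm (summable_norm_thTerm hq1 hq0 hx)
      (summable_norm_prodTerm hq1 hq0 hx k)]
    rw [← Equiv.tsum_eq (Fin.consEquiv (fun _ : Fin (k + 1) => ℤ)) (prodTerm q x (k + 1))]
    apply tsum_congr
    intro p
    simp only [Fin.consEquiv_apply, prodTerm]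
    rw [Fin.prod_univ_succ]
    simp [Fin.cons_zero, Fin.cons_succ]

noncomputable def gamma' (k : ℕ) (n : ℤ) (q : ℂ) : ℂ :=
  ∑' f : {f : Fin k → ℤ // ∑ i, f i = n}, q ^ ((∑ i, f.1 i * (f.1 i - 1)) / 2)

lemma gammaCoeff_eq_gamma' {q : ℂ} (k : ℕ) (n : ℤ) : gammaCoeff k n q = gamma' k n q :=
  tsum_congr fun f => zpow_toNat _ _ (Int.ediv_nonneg (sum_mul_pred_nonneg _) (by norm_num))

def fiberShift (k : ℕ) (i m : ℤ) :
    {f : Fin k → ℤ // ∑ j, f j = i} ≃ {f : Fin k → ℤ // ∑ j, f j = i + k * m} where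
  toFun g := ⟨fun j => g.1 j + m, by
    rw [Finset.sum_add_distrib, g.2]
    simp [mul_comm]⟩
  invFun f := ⟨fun j => f.1 j - m, by
    rw [Finset.sum_sub_distrib, f.2]
    simp [mul_comm]⟩
  left_inv g := by ext j; simp
  right_inv f := by ext j; simp

lemma shift_exponent (k : ℕ) (i m : ℤ) (g : Fin k → ℤ) (hg : ∑ j, g j = i) :
    (∑ j, (g j + m) * ((g j + m) - 1)) / 2
      = (∑ j, g j * (g j - 1)) / 2 + (i * m + k * (m * (m - 1) / 2)) := by
  have hsum : ∑ j, (g j + m) * ((g j + m) - 1)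
      = (∑ j, g j * (g j - 1)) + 2 * (m * i) + (k : ℤ) * (m * (m - 1)) := by
    have h : ∀ j : Fin k, (g j + m) * ((g j + m) - 1)
        = g j * (g j - 1) + 2 * (m * g j) + m * (m - 1) := fun j => by ring
    simp_rw [h]
    rw [Finset.sum_add_distrib, Finset.sum_add_distrib, ← Finset.mul_sum, ← Finset.mul_sum, hg,
      Finset.sum_const, Finset.card_univ, Fintype.card_fin, nsmul_eq_mul]
  rw [hsum]
  have evenA : Even (∑ j, g j * (g j - 1)) := by
    rw [sum_mul_pred_even]; exact even_two_mul _
  obtain ⟨a, ha⟩ := evenA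
  obtain ⟨b, hb⟩ := even_mul_pred m
  rw [ha, hb]
  have h1 : (k : ℤ) * (b + b) = 2 * ((k : ℤ) * b) := by ring
  have h2 : ((b : ℤ) + b) / 2 = b := by omega
  rw [h1, h2]
  have h3 : i * m = m * i := mul_comm _ _
  rw [h3]
  generalize (k : ℤ) * b = t
  generalize m * i = c
  omega

lemma gamma'_shift {q : ℂ} (hq0 : q ≠ 0) (k : ℕ) (i m : ℤ) :
    gamma' k (i + k * m) q = gamma' k i q * q ^ (i * m + (k : ℤ) * (m * (m - 1) / 2)) := by
  rw [gamma', gamma', ← Equiv.tsum_eq (fiberShift k i m), ← tsum_mul_right]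
  apply tsum_congr
  intro g
  rw [← zpow_add₀ hq0]
  congr 1
  exact shift_exponent k i m g.1 g.2

def resEquiv (k : ℕ) (hk : 0 < k) : Fin k × ℤ ≃ ℤ where
  toFun p := (p.1 : ℤ) + k * p.2
  invFun n := (⟨(n % k).toNat, by
      have h1 : 0 ≤ n % (k : ℤ) := Int.emod_nonneg n (by exact_mod_cast hk.ne')
      have h2 : n % (k : ℤ) < k := Int.emod_lt_of_pos n (by exact_mod_cast hk)
      omega⟩, n / k)
  left_inv := by
    rintro ⟨i, m⟩
    have hik : (i : ℤ) < k := by exact_mod_cast i.2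
    have h0 : (0 : ℤ) ≤ (i : ℤ) := Int.ofNat_nonneg _
    have hmod : ((i : ℤ) + k * m) % k = i := by
      rw [Int.add_mul_emod_self_left, Int.emod_eq_of_lt h0 hik]
    have hdiv : ((i : ℤ) + k * m) / k = m := by
      rw [Int.add_mul_ediv_left _ _ (by exact_mod_cast hk.ne' : (k : ℤ) ≠ 0),
        Int.ediv_eq_zero_of_lt h0 hik, zero_add]
    simp [Prod.ext_iff, Fin.ext_iff, hmod, hdiv]
  right_inv n := by
    have h1 : 0 ≤ n % (k : ℤ) := Int.emod_nonneg n (by exact_mod_cast hk.ne')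
    simp only []
    rw [Int.toNat_of_nonneg h1]
    exact Int.emod_add_mul_ediv n k

/-- `θ_q(x)^k = ∑_{i=0}^{k-1} γ_{k,i}(q) x^i θ_{q^k}(q^i x^k)`. -/
theorem stmt4 (q : ℂ) (hq0 : 0 < ‖q‖) (hq1 : ‖q‖ < 1)
    (k : ℕ) (hk : 1 ≤ k) (x : ℂ) (hx : x ≠ 0) :
    theta q x ^ k =
      ∑ i ∈ Finset.range k, gammaCoeff k i q * x ^ i * theta (q ^ k) (q ^ i * x ^ k) := by
  have hq0' : q ≠ 0 := by
    intro h; rw [h] at hq0; simp at hq0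
  have hkpos : 0 < k := hk
  -- Step 1: expand the power as a sum over Fin k → ℤ
  have hnorm := summable_norm_prodTerm hq1 hq0' hx k
  have hsum : Summable (prodTerm q x k) := hnorm.of_norm
  have h1 : theta q x ^ k = ∑' f : Fin k → ℤ, prodTerm q x k f := theta_pow hq1 hq0' hx k
  -- Step 2: group by the total degree
  have hsumσ : Summable ((prodTerm q x k) ∘
      (Equiv.sigmaFiberEquiv (fun f : Fin k → ℤ => ∑ j, f j))) :=
    (Equiv.sigmaFiberEquiv _).summable_iff.mpr hsum
  have hc : ∀ n : ℤ, (∑' f : {f : Fin k → ℤ // ∑ j, f j = n}, prodTerm q x k f.1)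
      = gamma' k n q * x ^ n := by
    intro n
    rw [gamma', ← tsum_mul_right]
    apply tsum_congr
    intro f
    rw [prodTerm_eq hq0' hx f.1]
    congr 2
    exact f.2
  have h2 : (∑' f : Fin k → ℤ, prodTerm q x k f) = ∑' n : ℤ, gamma' k n q * x ^ n := by
    rw [← (Equiv.sigmaFiberEquiv (fun f : Fin k → ℤ => ∑ j, f j)).tsum_eq (prodTerm q x k)]
    have := Summable.tsum_sigma hsumσ
    rw [Function.comp_def] at this
    rw [this]
    exact tsum_congr fun n => hc n
  have hcs : Summable (fun n : ℤ => gamma' k n q * x ^ n) :=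
    hsumσ.sigma.congr fun n => hc n
  -- Step 3: split ℤ into residue classes mod k
  have h3 : (∑' n : ℤ, gamma' k n q * x ^ n)
      = ∑ i : Fin k, ∑' m : ℤ,
          gamma' k ((i : ℤ) + (k : ℤ) * m) q * x ^ ((i : ℤ) + (k : ℤ) * m) := by
    rw [← (resEquiv k hkpos).tsum_eq (fun n => gamma' k n q * x ^ n)]
    have hps := Summable.tsum_prod ((resEquiv k hkpos).summable_iff.mpr hcs)
    simp only [Function.comp_def] at hps
    rw [hps, tsum_fintype]
    rfl
  -- Step 4: per-residue identity
  have h4 : ∀ (i : Fin k), (∑' m : ℤ,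
      gamma' k ((i : ℤ) + (k : ℤ) * m) q * x ^ ((i : ℤ) + (k : ℤ) * m))
      = gammaCoeff k (i : ℤ) q * x ^ (i : ℕ) * theta (q ^ k) (q ^ (i : ℕ) * x ^ k) := by
    intro i
    have hterm : ∀ m : ℤ,
        gamma' k ((i : ℤ) + (k : ℤ) * m) q * x ^ ((i : ℤ) + (k : ℤ) * m)
        = gammaCoeff k (i : ℤ) q * x ^ (i : ℕ) *
            ((q ^ k) ^ (m * (m - 1) / 2).toNat * (q ^ (i : ℕ) * x ^ k) ^ m) := by
      intro m
      rw [gamma'_shift hq0', gammaCoeff_eq_gamma']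
      have hA : ((q : ℂ) ^ k) ^ (m * (m - 1) / 2).toNat
          = q ^ ((k : ℤ) * (m * (m - 1) / 2)) := by
        have hTnn : 0 ≤ m * (m - 1) / 2 := Int.ediv_nonneg (nonneg_mul_pred m) (by norm_num)
        rw [← pow_mul, ← zpow_natCast q (k * (m * (m - 1) / 2).toNat)]
        congr 1
        rw [Nat.cast_mul, Int.toNat_of_nonneg hTnn]
      have hB : ((q : ℂ) ^ (i : ℕ) * x ^ k) ^ m = q ^ ((i : ℤ) * m) * x ^ ((k : ℤ) * m) := by
        rw [mul_zpow, ← zpow_natCast q (i : ℕ), ← zpow_natCast x k, ← zpow_mul, ← zpow_mul]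
      have hC : x ^ ((i : ℤ) + (k : ℤ) * m) = x ^ (i : ℕ) * x ^ ((k : ℤ) * m) := by
        rw [zpow_add₀ hx, zpow_natCast]
      rw [hA, hB, hC, zpow_add₀ hq0']
      ring
    simp_rw [hterm]
    rw [tsum_mul_left]
    rfl
  -- Assemble
  rw [h1, h2, h3]
  rw [← Fin.sum_univ_eq_sum_range
    (fun i => gammaCoeff k (i : ℤ) q * x ^ i * theta (q ^ k) (q ^ i * x ^ k)) k]
  exact Finset.sum_congr rfl fun i _ => h4 i
end

section
/- Let Q(x) := ∑_{1≤i≤j≤k} x_i x_j and S(x) := x_1 + ⋯ + x_k on ℝ^k. Then Q is a positive definite quadratic form, and for 0 < |q| < 1 and n ∈ ℤ one has γ_{k+1,n}(q) = q^{n(n−1)/2} · ∑_{m∈ℤ^k} q^{Q(m) − n S(m)}. -/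
/-- `Q(m) = ∑_{i≤j} m_i m_j` over the integers. -/
def Qform (k : ℕ) (m : Fin k → ℤ) : ℤ :=
  ∑ i : Fin k, ∑ j : Fin k, if i ≤ j then m i * m j else 0

/-- `S(m) = ∑ m_i`. -/
def Sform (k : ℕ) (m : Fin k → ℤ) : ℤ := ∑ i : Fin k, m i

lemma two_mul_Qgen {R : Type*} [CommRing R] [LinearOrder R] [IsStrictOrderedRing R] (k : ℕ) (m : Fin k → R) :
    2 * (∑ i : Fin k, ∑ j : Fin k, if i ≤ j then m i * m j else 0) =
      (∑ i : Fin k, m i) ^ 2 + ∑ i : Fin k, m i * m i := by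
  have hswap : (∑ i : Fin k, ∑ j : Fin k, if i ≤ j then m i * m j else 0)
      = ∑ i : Fin k, ∑ j : Fin k, if j ≤ i then m i * m j else 0 := by
    rw [Finset.sum_comm]
    exact Finset.sum_congr rfl fun i _ => Finset.sum_congr rfl fun j _ => by rw [mul_comm]
  have key : ∀ i j : Fin k,
      ((if i ≤ j then m i * m j else 0) + if j ≤ i then m i * m j else 0)
        = m i * m j + if i = j then m i * m j else 0 := by
    intro i j
    rcases lt_trichotomy i j with h | h | h
    · simp [h.le, h.ne, not_le.mpr h]
    · subst h; simp
    · simp [h.le, h.ne', not_le.mpr h]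
  have hdiag : (∑ i : Fin k, ∑ j : Fin k, if i = j then m i * m j else 0)
      = ∑ i : Fin k, m i * m i := by
    refine Finset.sum_congr rfl fun i _ => ?_
    simp [Finset.sum_ite_eq]
  calc 2 * (∑ i : Fin k, ∑ j : Fin k, if i ≤ j then m i * m j else 0)
      = (∑ i : Fin k, ∑ j : Fin k, if i ≤ j then m i * m j else 0)
        + ∑ i : Fin k, ∑ j : Fin k, if j ≤ i then m i * m j else 0 := by
        rw [← hswap, two_mul]
    _ = ∑ i : Fin k, ∑ j : Fin k,
          ((if i ≤ j then m i * m j else 0) + if j ≤ i then m i * m j else 0) := by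
        rw [← Finset.sum_add_distrib]
        exact Finset.sum_congr rfl fun i _ => by rw [← Finset.sum_add_distrib]
    _ = ∑ i : Fin k, ∑ j : Fin k, (m i * m j + if i = j then m i * m j else 0) := by
        exact Finset.sum_congr rfl fun i _ => Finset.sum_congr rfl fun j _ => key i j
    _ = (∑ i : Fin k, ∑ j : Fin k, m i * m j)
        + ∑ i : Fin k, ∑ j : Fin k, if i = j then m i * m j else 0 := by
        rw [← Finset.sum_add_distrib]
        exact Finset.sum_congr rfl fun i _ => by rw [← Finset.sum_add_distrib]
    _ = (∑ i : Fin k, m i) ^ 2 + ∑ i : Fin k, m i * m i := by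
        rw [hdiag, sq, Finset.sum_mul_sum]

lemma mul_pred_nonneg (t : ℤ) : 0 ≤ t * (t - 1) := by
  rcases le_or_gt t 0 with h | h
  · nlinarith [mul_nonneg (by omega : (0:ℤ) ≤ -t) (by omega : (0:ℤ) ≤ 1 - t)]
  · exact mul_nonneg (by omega) (by omega)

def sumEquiv (k : ℕ) (n : ℤ) : (Fin k → ℤ) ≃ {f : Fin (k + 1) → ℤ // ∑ i, f i = n} where
  toFun m := ⟨Fin.snoc m (n - ∑ i, m i), by
    rw [Fin.sum_univ_castSucc]
    simp⟩
  invFun f i := f.1 i.castSucc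
  left_inv m := by funext i; simp
  right_inv f := by
    have h := f.2
    rw [Fin.sum_univ_castSucc] at h
    ext i
    refine Fin.lastCases ?_ ?_ i
    · simp only [Fin.snoc_last]
      linarith
    · intro j; simp

/-- `Q` is positive definite, and
`γ_{k+1,n}(q) = q^{n(n-1)/2} ∑_{m∈ℤ^k} q^{Q(m) - n S(m)}`. -/
theorem stmt9 (k : ℕ) (hk : 1 ≤ k) :
    (∀ x : Fin k → ℝ, x ≠ 0 →
      0 < ∑ i : Fin k, ∑ j : Fin k, if i ≤ j then x i * x j else 0) ∧
    ∀ (q : ℂ), 0 < ‖q‖ → ‖q‖ < 1 → ∀ n : ℤ,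
      gammaCoeff (k + 1) n q =
        q ^ (n * (n - 1) / 2).toNat *
          ∑' m : Fin k → ℤ, q ^ (Qform k m - n * Sform k m) := by
  constructor
  · intro x hx
    obtain ⟨i, hi⟩ := Function.ne_iff.mp hx
    have hP : 0 < ∑ i : Fin k, x i * x i :=
      Finset.sum_pos' (fun j _ => mul_self_nonneg _)
        ⟨i, Finset.mem_univ i, mul_self_pos.mpr hi⟩
    have h2 := two_mul_Qgen k x
    nlinarith [sq_nonneg (∑ i : Fin k, x i)]
  · intro q hq0 hq1 n
    have hq : q ≠ 0 := by
      intro h; rw [h] at hq0; simp at hq0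
    have hNnn : 0 ≤ n * (n - 1) := mul_pred_nonneg n
    have hNev : (2 : ℤ) ∣ n * (n - 1) := by
      have h := (Int.even_mul_succ_self (n - 1)).two_dvd
      simpa [sub_add_cancel, mul_comm] using h
    -- rewrite the tsum over the subtype as a tsum over `Fin k → ℤ`
    rw [gammaCoeff, ← Equiv.tsum_eq (sumEquiv k n)
      (fun m => q ^ ((∑ i, m.1 i * (m.1 i - 1)) / 2).toNat)]
    rw [← tsum_mul_left]
    refine tsum_congr fun m => ?_
    set S := Sform k m with hS
    set g : Fin (k + 1) → ℤ := Fin.snoc m (n - S) with hg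
    have hterm : ((sumEquiv k n m : {f : Fin (k + 1) → ℤ // ∑ i, f i = n}) : Fin (k+1) → ℤ)
        = g := by
      simp [sumEquiv, hg, hS, Sform]
    have hQ2 := two_mul_Qgen k m
    have hsum : (∑ i, g i * (g i - 1))
        = n * (n - 1) + 2 * (Qform k m - n * Sform k m) := by
      rw [Fin.sum_univ_castSucc]
      simp only [hg, Fin.snoc_castSucc, Fin.snoc_last]
      have hP : (∑ i : Fin k, m i * (m i - 1))
          = (∑ i : Fin k, m i * m i) - Sform k m := by
        simp [Sform, mul_sub, Finset.sum_sub_distrib, mul_one]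
      rw [hP]
      have : Qform k m = ∑ i : Fin k, ∑ j : Fin k, if i ≤ j then m i * m j else 0 := rfl
      rw [← this] at hQ2
      simp only [hS, Sform]
      linear_combination -hQ2
    have hEnn : 0 ≤ ∑ i, g i * (g i - 1) :=
      Finset.sum_nonneg fun i _ => mul_pred_nonneg _
    have hdiv : (∑ i, g i * (g i - 1)) / 2
        = n * (n - 1) / 2 + (Qform k m - n * Sform k m) := by
      omega
    have h1 : q ^ ((∑ i, g i * (g i - 1)) / 2).toNat
        = q ^ (((∑ i, g i * (g i - 1)) / 2 : ℤ)) := by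
      rw [← zpow_natCast, Int.toNat_of_nonneg (by omega)]
    have h2 : q ^ (n * (n - 1) / 2).toNat = q ^ ((n * (n - 1) / 2 : ℤ)) := by
      rw [← zpow_natCast, Int.toNat_of_nonneg (by omega)]
    rw [hterm, h1, h2, hdiv, zpow_add₀ hq]
end

section
/- Let F be a positive definite quadratic form and L a linear form on ℝ^k, and for M > 0 set Λ_M := {y ∈ ℤ^k : F(y) + L(y) ≤ M}. Then as M → +∞, card Λ_M = (V_k / √D_F) · M^{k/2} + O(M^{(k−1)/2}), where V_k is the volume of the unit ball in ℝ^k and D_F is the determinant of the Gram matrix of F. -/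
open Filter Asymptotics MeasureTheory Matrix Metric
open scoped ENNReal

section Aux

variable {k : ℕ}

lemma aux_quad_eq (a : Fin k → Fin k → ℝ) (G : Matrix (Fin k) (Fin k) ℝ)
    (hG : ∀ i j, G i j = if i = j then a i i else if i < j then a i j / 2 else a j i / 2)
    (x : Fin k → ℝ) :
    x ⬝ᵥ G *ᵥ x = ∑ i : Fin k, ∑ j : Fin k, if i ≤ j then a i j * x i * x j else 0 := by
  have h1 : x ⬝ᵥ G *ᵥ x = ∑ i : Fin k, ∑ j : Fin k, x i * G i j * x j := by
    simp only [dotProduct, Matrix.mulVec, Finset.mul_sum]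
    exact Finset.sum_congr rfl fun i _ => Finset.sum_congr rfl fun j _ => by ring
  have h2 : ∀ i j : Fin k, x i * G i j * x j =
      (if i = j then a i i * x i * x j else 0) +
      ((if i < j then a i j / 2 * x i * x j else 0) +
       (if j < i then a j i / 2 * x i * x j else 0)) := by
    intro i j
    rw [hG]
    rcases lt_trichotomy i j with h | h | h <;>
      split_ifs <;>
        first | ring1 | exact absurd ‹j < i› (asymm ‹i < j›) | simp_all
  have h3 : ∀ i j : Fin k, (if i ≤ j then a i j * x i * x j else 0) =
      (if i = j then a i i * x i * x j else 0) + (if i < j then a i j * x i * x j else 0) := by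
    intro i j
    rcases lt_trichotomy i j with h | h | h
    · simp [h.le, h, h.ne]
    · simp [h]
    · simp [not_le.mpr h, h.ne', asymm h]
  simp only [h1, h2, h3, Finset.sum_add_distrib]
  congr 1
  have hswap : ∑ i : Fin k, ∑ j : Fin k, (if j < i then a j i / 2 * x i * x j else 0)
      = ∑ i : Fin k, ∑ j : Fin k, (if i < j then a i j / 2 * x j * x i else 0) :=
    Finset.sum_comm
  rw [hswap, ← Finset.sum_add_distrib]
  refine Finset.sum_congr rfl fun i _ => ?_
  rw [← Finset.sum_add_distrib]
  refine Finset.sum_congr rfl fun j _ => ?_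
  by_cases h : i < j <;> simp [h] <;> ring

noncomputable def iotaE (k : ℕ) : (Fin k → ℝ) ≃ₗ[ℝ] EuclideanSpace ℝ (Fin k) :=
  (WithLp.linearEquiv 2 ℝ (Fin k → ℝ)).symm

lemma aux_vol (S : Matrix (Fin k) (Fin k) ℝ) (hdet : S.det ≠ 0)
    (v : EuclideanSpace ℝ (Fin k)) {r : ℝ} (hr : 0 ≤ r) :
    volume {x : Fin k → ℝ | ‖iotaE k (S *ᵥ x) + v‖ ≤ r}
      = ENNReal.ofReal (|S.det|⁻¹ * r ^ k) *
        volume (ball (0 : EuclideanSpace ℝ (Fin k)) 1) := by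
  classical
  have hEk : Module.finrank ℝ (EuclideanSpace ℝ (Fin k)) = k := finrank_euclideanSpace_fin
  set TE : EuclideanSpace ℝ (Fin k) →ₗ[ℝ] EuclideanSpace ℝ (Fin k) :=
    ((iotaE k : (Fin k → ℝ) →ₗ[ℝ] EuclideanSpace ℝ (Fin k)).comp S.mulVecLin).comp
      ((iotaE k).symm : EuclideanSpace ℝ (Fin k) →ₗ[ℝ] (Fin k → ℝ)) with hTE
  have hdetTE : LinearMap.det TE = S.det := by
    rw [hTE, LinearMap.comp_assoc, LinearMap.det_conj S.mulVecLin (iotaE k)]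
    rw [← Matrix.toLin'_apply', LinearMap.det_toLin']
  have hcont : Continuous fun x : Fin k → ℝ => ‖iotaE k (S *ᵥ x) + v‖ :=
    (((iotaE k).toLinearMap.continuous_of_finiteDimensional.comp
      S.mulVecLin.continuous_of_finiteDimensional).add continuous_const).norm
  have hmeas : MeasurableSet {x : Fin k → ℝ | ‖iotaE k (S *ᵥ x) + v‖ ≤ r} :=
    (isClosed_le hcont continuous_const).measurableSet
  have hpre : ((MeasurableEquiv.toLp 2 (Fin k → ℝ)).symm) ⁻¹'
      {x : Fin k → ℝ | ‖iotaE k (S *ᵥ x) + v‖ ≤ r} = TE ⁻¹' closedBall (-v) r := by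
    ext y
    simp only [Set.mem_preimage, Set.mem_setOf_eq, mem_closedBall, dist_eq_norm,
      sub_neg_eq_add, hTE, LinearMap.coe_comp, Function.comp_apply, LinearEquiv.coe_coe]
    rfl
  calc volume {x : Fin k → ℝ | ‖iotaE k (S *ᵥ x) + v‖ ≤ r}
      = volume (((MeasurableEquiv.toLp 2 (Fin k → ℝ)).symm) ⁻¹'
          {x : Fin k → ℝ | ‖iotaE k (S *ᵥ x) + v‖ ≤ r}) :=
        ((EuclideanSpace.volume_preserving_symm_measurableEquiv_toLp (Fin k)).measure_preimage
          hmeas.nullMeasurableSet).symm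
    _ = volume (TE ⁻¹' closedBall (-v) r) := by rw [hpre]
    _ = ENNReal.ofReal |(LinearMap.det TE)⁻¹| * volume (closedBall (-v) r) :=
        Measure.addHaar_preimage_linearMap volume (hdetTE ▸ hdet) _
    _ = ENNReal.ofReal (|S.det|⁻¹ * r ^ k) *
          volume (ball (0 : EuclideanSpace ℝ (Fin k)) 1) := by
        rw [Measure.addHaar_closedBall volume (-v) hr, hdetTE, abs_inv,
          ← mul_assoc, ← ENNReal.ofReal_mul (by positivity), hEk]

lemma aux_count (T : (Fin k → ℝ) →ₗ[ℝ] EuclideanSpace ℝ (Fin k))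
    (v : EuclideanSpace ℝ (Fin k)) (c r : ℝ)
    (hc : ∀ u : Fin k → ℝ, (∀ i, 0 ≤ u i ∧ u i ≤ 1) → ‖T u‖ ≤ c) :
    volume {x : Fin k → ℝ | ‖T x + v‖ ≤ r - c}
        ≤ ({y : Fin k → ℤ | ‖T (fun i => (y i : ℝ)) + v‖ ≤ r}.encard : ℝ≥0∞)
    ∧ ({y : Fin k → ℤ | ‖T (fun i => (y i : ℝ)) + v‖ ≤ r}.encard : ℝ≥0∞)
        ≤ volume {x : Fin k → ℝ | ‖T x + v‖ ≤ r + c} := by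
  classical
  set Λ : Set (Fin k → ℤ) := {y | ‖T (fun i => (y i : ℝ)) + v‖ ≤ r} with hΛ
  set cube : (Fin k → ℤ) → Set (Fin k → ℝ) :=
    fun y => Set.univ.pi fun i => Set.Ico (y i : ℝ) (y i + 1) with hcube
  have hmem : ∀ (y : Fin k → ℤ) (x : Fin k → ℝ),
      x ∈ cube y ↔ ∀ i, (y i : ℝ) ≤ x i ∧ x i < y i + 1 := by
    intro y x
    simp [hcube, Set.mem_pi]
  have hfloor : ∀ (y : Fin k → ℤ) (x : Fin k → ℝ), x ∈ cube y → ∀ i, ⌊x i⌋ = y i := by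
    intro y x hx i
    exact Int.floor_eq_iff.mpr ((hmem y x).mp hx i)
  have hcube_vol : ∀ y, volume (cube y) = 1 := by
    intro y
    rw [hcube, volume_pi_pi]
    simp
  have hcube_meas : ∀ y, MeasurableSet (cube y) := fun y =>
    MeasurableSet.univ_pi fun i => measurableSet_Ico
  have hdisj : Λ.PairwiseDisjoint cube := by
    intro y _ y' _ hne
    refine Set.disjoint_left.mpr fun x hx hx' => hne ?_
    funext i
    rw [← hfloor y x hx i, ← hfloor y' x hx' i]
  have hU : volume (⋃ y ∈ Λ, cube y) = Λ.encard := by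
    rw [measure_biUnion Λ.to_countable hdisj fun y _ => hcube_meas y]
    simp [hcube_vol]
  have hup : (⋃ y ∈ Λ, cube y) ⊆ {x : Fin k → ℝ | ‖T x + v‖ ≤ r + c} := by
    rintro x hx
    simp only [Set.mem_iUnion] at hx
    obtain ⟨y, hy, hxy⟩ := hx
    have hu : ‖T (x - fun i => (y i : ℝ))‖ ≤ c := by
      refine hc _ fun i => ?_
      have h := (hmem y x).mp hxy i
      constructor
      · simpa [sub_nonneg] using h.1
      · have : x i - (y i : ℝ) < 1 := by linarith [h.2]
        exact this.le
    have hdecomp : T x + v = (T (fun i => (y i : ℝ)) + v) + T (x - fun i => (y i : ℝ)) := by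
      rw [map_sub]; abel
    calc ‖T x + v‖ = ‖(T (fun i => (y i : ℝ)) + v) + T (x - fun i => (y i : ℝ))‖ := by
          rw [hdecomp]
      _ ≤ ‖T (fun i => (y i : ℝ)) + v‖ + ‖T (x - fun i => (y i : ℝ))‖ := norm_add_le _ _
      _ ≤ r + c := add_le_add hy hu
  have hlow : {x : Fin k → ℝ | ‖T x + v‖ ≤ r - c} ⊆ ⋃ y ∈ Λ, cube y := by
    intro x hx
    set y : Fin k → ℤ := fun i => ⌊x i⌋ with hy
    have hxy : x ∈ cube y := by
      rw [hmem]
      exact fun i => ⟨Int.floor_le _, Int.lt_floor_add_one _⟩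
    have hu : ‖T (x - fun i => (y i : ℝ))‖ ≤ c := by
      refine hc _ fun i => ?_
      constructor
      · simp [sub_nonneg, hy, Int.floor_le (x i)]
      · have := Int.lt_floor_add_one (x i)
        have h2 : x i - (y i : ℝ) < 1 := by simp only [hy]; linarith
        exact h2.le
    have hyΛ : y ∈ Λ := by
      have hdecomp : T (fun i => (y i : ℝ)) + v = (T x + v) - T (x - fun i => (y i : ℝ)) := by
        rw [map_sub]; abel
      calc ‖T (fun i => (y i : ℝ)) + v‖
          = ‖(T x + v) - T (x - fun i => (y i : ℝ))‖ := by rw [hdecomp]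
        _ ≤ ‖T x + v‖ + ‖T (x - fun i => (y i : ℝ))‖ := norm_sub_le _ _
        _ ≤ (r - c) + c := add_le_add hx hu
        _ = r := by ring
    exact Set.mem_biUnion hyΛ hxy
  constructor
  · rw [← hU]; exact measure_mono hlow
  · rw [← hU]; exact measure_mono hup

lemma aux_pow_gap (n : ℕ) {x y : ℝ} (hy : 0 ≤ y) (hxy : y ≤ x) :
    x ^ n - y ^ n ≤ n * (x - y) * x ^ (n - 1) := by
  have hx : 0 ≤ x := hy.trans hxy
  rw [← geom_sum₂_mul x y n]
  have hbound : ∀ i ∈ Finset.range n, x ^ i * y ^ (n - 1 - i) ≤ x ^ (n - 1) := by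
    intro i hi
    have hin : i ≤ n - 1 := Nat.le_sub_one_of_lt (Finset.mem_range.mp hi)
    calc x ^ i * y ^ (n - 1 - i) ≤ x ^ i * x ^ (n - 1 - i) := by
          exact mul_le_mul_of_nonneg_left (pow_le_pow_left₀ hy hxy _) (pow_nonneg hx i)
      _ = x ^ (n - 1) := by rw [← pow_add]; congr 1; omega
  calc (∑ i ∈ Finset.range n, x ^ i * y ^ (n - 1 - i)) * (x - y)
      ≤ (n * x ^ (n - 1)) * (x - y) := by
        refine mul_le_mul_of_nonneg_right ?_ (sub_nonneg.mpr hxy)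
        calc (∑ i ∈ Finset.range n, x ^ i * y ^ (n - 1 - i))
            ≤ ∑ _i ∈ Finset.range n, x ^ (n - 1) := Finset.sum_le_sum hbound
          _ = n * x ^ (n - 1) := by simp [mul_comm]
    _ = n * (x - y) * x ^ (n - 1) := by ring

end Aux

set_option maxHeartbeats 1000000 in
/-- Geometry-of-numbers count: for a positive definite quadratic form
`F(y) = ∑_{i≤j} a_{ij} y_i y_j` and a linear form `L(y) = ∑ b_i y_i`,
`card {y ∈ ℤ^k : F(y)+L(y) ≤ M} = (V_k/√D_F) M^{k/2} + O(M^{(k-1)/2})`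
as `M → ∞`, where `V_k` is the volume of the unit ball of `ℝ^k` and `D_F`
the determinant of the Gram matrix of `F`. -/
theorem stmt11 (k : ℕ) (hk : 1 ≤ k)
    (a : Fin k → Fin k → ℝ) (b : Fin k → ℝ)
    (F : (Fin k → ℝ) → ℝ)
    (hF : ∀ y, F y = ∑ i : Fin k, ∑ j : Fin k, if i ≤ j then a i j * y i * y j else 0)
    (L : (Fin k → ℝ) → ℝ)
    (hL : ∀ y, L y = ∑ i : Fin k, b i * y i)
    (hpos : ∀ y : Fin k → ℝ, y ≠ 0 → 0 < F y)
    (G : Matrix (Fin k) (Fin k) ℝ)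
    (hG : ∀ i j, G i j = if i = j then a i i else if i < j then a i j / 2 else a j i / 2)
    (Vk : ℝ)
    (hVk : Vk = (volume (Metric.ball (0 : EuclideanSpace ℝ (Fin k)) 1)).toReal) :
    (fun M : ℝ =>
        (Nat.card {y : Fin k → ℤ //
            F (fun i => (y i : ℝ)) + L (fun i => (y i : ℝ)) ≤ M} : ℝ) -
          Vk / Real.sqrt G.det * M ^ ((k : ℝ) / 2)) =O[atTop]
      fun M : ℝ => M ^ (((k : ℝ) - 1) / 2) := by
  classical
  have hQ : ∀ x : Fin k → ℝ, F x = x ⬝ᵥ G *ᵥ x := fun x => by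
    rw [hF, aux_quad_eq a G hG]
  have hGsym : ∀ i j, G i j = G j i := by
    intro i j
    rw [hG, hG]
    rcases lt_trichotomy i j with h | h | h
    · rw [if_neg h.ne, if_pos h, if_neg h.ne', if_neg (asymm h)]
    · rw [h]
    · rw [if_neg h.ne', if_neg (asymm h), if_pos h, if_neg h.ne]
  have hherm : G.IsHermitian := by
    rw [Matrix.IsHermitian, Matrix.conjTranspose_eq_transpose_of_trivial]
    ext i j
    rw [Matrix.transpose_apply, hGsym]
  have hGpd : G.PosDef := by
    refine Matrix.PosDef.of_dotProduct_mulVec_pos hherm fun x hx => ?_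
    have hsx : star x = x := by
      funext i; exact star_trivial _
    rw [hsx, ← hQ]
    exact hpos x hx
  set S := (open scoped MatrixOrder in CFC.sqrt G) with hSdef
  have hSS : S * S = G := by
    open scoped MatrixOrder in exact CFC.sqrt_mul_sqrt_self G hGpd.posSemidef.nonneg
  have hSps : S.PosSemidef := by
    open scoped MatrixOrder in exact (CFC.sqrt_nonneg G).posSemidef
  have hSt : Sᵀ = S := by
    rw [← Matrix.conjTranspose_eq_transpose_of_trivial]
    exact hSps.1
  have hdetG : 0 < G.det := hGpd.det_pos
  have hdetS2 : S.det * S.det = G.det := by rw [← Matrix.det_mul, hSS]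
  have hdetSnn : 0 ≤ S.det := by
    rw [hSps.1.det_eq_prod_eigenvalues]
    exact Finset.prod_nonneg fun i _ => hSps.eigenvalues_nonneg i
  have hdetS : S.det = Real.sqrt G.det := by
    rw [← hdetS2, Real.sqrt_mul_self hdetSnn]
  have hdetSne : S.det ≠ 0 := by
    rw [hdetS]; exact (Real.sqrt_pos.mpr hdetG).ne'
  have hGt : Gᵀ = G := by
    ext i j; rw [Matrix.transpose_apply, hGsym]
  have hsymm : ∀ u w : Fin k → ℝ, u ⬝ᵥ G *ᵥ w = w ⬝ᵥ G *ᵥ u := by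
    intro u w
    rw [Matrix.dotProduct_mulVec, ← Matrix.mulVec_transpose, hGt, dotProduct_comm]
  have hnorm : ∀ w : Fin k → ℝ, ‖iotaE k w‖ ^ 2 = w ⬝ᵥ w := by
    intro w
    rw [EuclideanSpace.norm_eq, Real.sq_sqrt (by positivity)]
    simp [iotaE, dotProduct, Real.norm_eq_abs, sq_abs, sq]
  have hQnorm : ∀ x : Fin k → ℝ, x ⬝ᵥ G *ᵥ x = ‖iotaE k (S *ᵥ x)‖ ^ 2 := by
    intro x
    rw [hnorm, ← hSS, ← Matrix.mulVec_mulVec, Matrix.dotProduct_mulVec,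
      ← Matrix.mulVec_transpose, hSt]
  have hGinvG : G * G⁻¹ = 1 :=
    Matrix.mul_nonsing_inv G (isUnit_iff_ne_zero.mpr hdetG.ne')
  set y0 : Fin k → ℝ := (1/2 : ℝ) • (G⁻¹ *ᵥ b) with hy0
  have hGy0 : G *ᵥ y0 = (1/2 : ℝ) • b := by
    rw [hy0, Matrix.mulVec_smul, Matrix.mulVec_mulVec, hGinvG, Matrix.one_mulVec]
  set vE := iotaE k (S *ᵥ y0) with hvE
  set m0 := y0 ⬝ᵥ G *ᵥ y0 with hm0
  have hm0nn : 0 ≤ m0 := by rw [hm0, hQnorm]; positivity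
  set T : (Fin k → ℝ) →ₗ[ℝ] EuclideanSpace ℝ (Fin k) :=
    ((iotaE k : (Fin k → ℝ) →ₗ[ℝ] EuclideanSpace ℝ (Fin k))).comp S.mulVecLin with hT
  have hTx : ∀ x, T x = iotaE k (S *ᵥ x) := fun x => by
    simp [hT, Matrix.mulVecLin_apply]
  have hkey : ∀ x : Fin k → ℝ, F x + L x = ‖T x + vE‖ ^ 2 - m0 := by
    intro x
    have hL2 : L x = 2 * (x ⬝ᵥ G *ᵥ y0) := by
      rw [hL, hGy0, dotProduct_smul, smul_eq_mul]
      have hxb : x ⬝ᵥ b = ∑ i : Fin k, b i * x i := by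
        simp [dotProduct, mul_comm]
      rw [hxb]; ring
    have hadd : T x + vE = iotaE k (S *ᵥ (x + y0)) := by
      rw [hTx, hvE, Matrix.mulVec_add, map_add]
    have hexp : ‖T x + vE‖ ^ 2 = (x ⬝ᵥ G *ᵥ x) + 2 * (x ⬝ᵥ G *ᵥ y0) + m0 := by
      rw [hadd, ← hQnorm, add_dotProduct, Matrix.mulVec_add, dotProduct_add,
        dotProduct_add, hsymm y0 x, hm0]
      ring
    rw [hexp, hQ, hL2]
    ring
  set e : Fin k → (Fin k → ℝ) := fun i => Pi.single i (1:ℝ) with he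
  set c := ∑ i : Fin k, ‖T (e i)‖ with hc0
  have hcnn : 0 ≤ c := Finset.sum_nonneg fun i _ => norm_nonneg _
  have hc : ∀ u : Fin k → ℝ, (∀ i, 0 ≤ u i ∧ u i ≤ 1) → ‖T u‖ ≤ c := by
    intro u hu
    have hu_eq : u = ∑ i : Fin k, u i • e i := by
      funext j
      rw [Finset.sum_apply]
      simp [he, Pi.single_apply]
    calc ‖T u‖ = ‖∑ i : Fin k, u i • T (e i)‖ := by
          conv_lhs => rw [hu_eq]
          rw [map_sum]
          simp only [LinearMap.map_smul]
      _ ≤ ∑ i : Fin k, ‖u i • T (e i)‖ := norm_sum_le _ _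
      _ ≤ ∑ i : Fin k, ‖T (e i)‖ := by
          refine Finset.sum_le_sum fun i _ => ?_
          rw [norm_smul, Real.norm_eq_abs]
          have h1 : |u i| ≤ 1 := abs_le.mpr ⟨by linarith [(hu i).1], (hu i).2⟩
          nlinarith [norm_nonneg (T (e i))]
      _ = c := rfl
  clear_value S T vE y0 m0 e c
  clear hSdef hT hvE hy0 he hc0 hm0 hGy0 hGinvG hherm hGpd
  set D := Real.sqrt G.det with hD
  set A := Vk / D with hA
  have hVknn : 0 ≤ Vk := hVk ▸ ENNReal.toReal_nonneg
  have hAnn : 0 ≤ A := div_nonneg hVknn (Real.sqrt_nonneg _)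
  have hballne : volume (ball (0 : EuclideanSpace ℝ (Fin k)) 1) ≠ ⊤ :=
    measure_ball_lt_top.ne
  have hballofReal : volume (ball (0 : EuclideanSpace ℝ (Fin k)) 1) = ENNReal.ofReal Vk := by
    rw [hVk, ENNReal.ofReal_toReal hballne]
  have hDpos : 0 < D := Real.sqrt_pos.mpr hdetG
  set d := c + Real.sqrt m0 with hd
  have hdnn : 0 ≤ d := add_nonneg hcnn (Real.sqrt_nonneg _)
  rw [isBigO_iff]
  refine ⟨A * ((k:ℝ) * d * 2^(k-1)), ?_⟩
  filter_upwards [eventually_ge_atTop (max 1 ((d+1)^2))] with M hM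
  have hM1 : (1:ℝ) ≤ M := le_trans (le_max_left _ _) hM
  have hM0 : (0:ℝ) ≤ M := zero_le_one.trans hM1
  set t := Real.sqrt M with ht
  have ht1 : 1 ≤ t := by
    rw [ht]
    exact (Real.le_sqrt zero_le_one hM0).mpr (by simpa using hM1)
  have htpos : 0 < t := lt_of_lt_of_le one_pos ht1
  have htd : d + 1 ≤ t := by
    have h1 : Real.sqrt ((d+1)^2) ≤ Real.sqrt M :=
      Real.sqrt_le_sqrt (le_trans (le_max_right _ _) hM)
    rwa [Real.sqrt_sq (by linarith)] at h1
  set s := Real.sqrt (M + m0) with hs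
  have hts : t ≤ s := Real.sqrt_le_sqrt (le_add_of_nonneg_right hm0nn)
  have hsd : s ≤ t + Real.sqrt m0 := by
    have h1 : M + m0 ≤ (t + Real.sqrt m0)^2 := by
      have h2 : t^2 = M := Real.sq_sqrt hM0
      have h3 : Real.sqrt m0 ^ 2 = m0 := Real.sq_sqrt hm0nn
      nlinarith [Real.sqrt_nonneg m0, htpos.le]
    calc s ≤ Real.sqrt ((t + Real.sqrt m0)^2) := Real.sqrt_le_sqrt h1
      _ = t + Real.sqrt m0 := Real.sqrt_sq (by positivity)
  have hspos : 0 < s := lt_of_lt_of_le htpos hts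
  have hsc : 0 ≤ s - c := by
    have : c ≤ d := by rw [hd]; linarith [Real.sqrt_nonneg m0]
    linarith [hts, htd]
  -- identify the counted set
  have hsetM : ∀ y : Fin k → ℤ,
      (F (fun i => (y i:ℝ)) + L (fun i => (y i:ℝ)) ≤ M) ↔
      ‖T (fun i => (y i:ℝ)) + vE‖ ≤ s := by
    intro y
    rw [hkey, sub_le_iff_le_add, hs, Real.le_sqrt (norm_nonneg _) (by linarith)]
  set Λ : Set (Fin k → ℤ) := {y | ‖T (fun i => (y i : ℝ)) + vE‖ ≤ s} with hΛ
  obtain ⟨hlow, hup⟩ := aux_count T vE c s hc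
  -- volumes of the two ellipsoids
  have hsetvol : ∀ r : ℝ, 0 ≤ r →
      volume {x : Fin k → ℝ | ‖T x + vE‖ ≤ r} = ENNReal.ofReal (A * r ^ k) := by
    intro r hr
    have hseteq : {x : Fin k → ℝ | ‖T x + vE‖ ≤ r}
        = {x : Fin k → ℝ | ‖iotaE k (S *ᵥ x) + vE‖ ≤ r} := by
      ext x; rw [Set.mem_setOf_eq, Set.mem_setOf_eq, hTx]
    rw [hseteq, aux_vol S hdetSne vE hr, hballofReal,
      ← ENNReal.ofReal_mul (by positivity)]
    congr 1
    rw [hdetS, abs_of_nonneg hDpos.le, hA]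
    field_simp
  have hvolup : volume {x : Fin k → ℝ | ‖T x + vE‖ ≤ s + c}
      = ENNReal.ofReal (A * (s + c) ^ k) := hsetvol _ (by positivity)
  have hvollow : volume {x : Fin k → ℝ | ‖T x + vE‖ ≤ s - c}
      = ENNReal.ofReal (A * (s - c) ^ k) := hsetvol _ hsc
  -- finiteness of Λ
  have hfin : Λ.Finite := by
    by_contra hinf
    have htop : (Λ.encard : ℝ≥0∞) = ⊤ := by
      rw [Set.encard_eq_top hinf]; rfl
    rw [hΛ] at htop
    rw [htop, hvolup] at hup
    exact (ENNReal.ofReal_lt_top.not_ge) hup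
  have hncard : (Λ.encard : ℝ≥0∞) = ((Nat.card ↥Λ : ℕ) : ℝ≥0∞) := by
    rw [hfin.encard_eq_coe_toFinset_card, Nat.card_coe_set_eq,
      Set.ncard_eq_toFinset_card _ hfin]
    simp
  set n : ℕ := Nat.card ↥Λ with hn
  have hcards : Nat.card {y : Fin k → ℤ //
      F (fun i => (y i:ℝ)) + L (fun i => (y i:ℝ)) ≤ M} = n := by
    rw [hn]
    exact Nat.card_congr (Equiv.subtypeEquivRight fun y => (hsetM y))
  have hupR : (n:ℝ) ≤ A * (s + c)^k := by
    have h1 := hup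
    rw [← hΛ, hncard, hvolup, ← ENNReal.ofReal_natCast] at h1
    exact (ENNReal.ofReal_le_ofReal_iff (by positivity)).mp h1
  have hlowR : A * (s - c)^k ≤ (n:ℝ) := by
    have h1 := hlow
    rw [← hΛ, hncard, hvollow, ← ENNReal.ofReal_natCast] at h1
    exact (ENNReal.ofReal_le_ofReal_iff (by positivity)).mp h1
  have htk : M ^ ((k:ℝ)/2) = t ^ k := by
    rw [ht, Real.sqrt_eq_rpow, ← Real.rpow_natCast (M ^ (1/(2:ℝ))) k, ← Real.rpow_mul hM0]
    congr 1
    ring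
  have htk1 : M ^ (((k:ℝ)-1)/2) = t ^ (k-1) := by
    have hcast : ((k:ℝ) - 1) = ((k-1 : ℕ) : ℝ) := by
      rw [Nat.cast_sub hk]; simp
    rw [hcast, ht, Real.sqrt_eq_rpow, ← Real.rpow_natCast (M ^ (1/(2:ℝ))) (k-1),
      ← Real.rpow_mul hM0]
    congr 1
    ring
  have hsc_ub : s + c ≤ t + d := by rw [hd]; linarith [hsd]
  have hsc_lb : t - d ≤ s - c := by
    have h1 : 0 ≤ Real.sqrt m0 := Real.sqrt_nonneg _
    rw [hd]; linarith [hts]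
  have htd0 : (0:ℝ) ≤ t - d := by linarith [htd]
  have hub2 : (n:ℝ) ≤ A * (t+d)^k :=
    le_trans hupR (mul_le_mul_of_nonneg_left
      (pow_le_pow_left₀ (by linarith [hspos, hcnn]) hsc_ub k) hAnn)
  have hlb2 : A * (t-d)^k ≤ (n:ℝ) :=
    le_trans (mul_le_mul_of_nonneg_left (pow_le_pow_left₀ htd0 hsc_lb k) hAnn) hlowR
  have hgap1 : (t+d)^k - t^k ≤ (k:ℝ) * d * (2*t)^(k-1) := by
    have h1 := aux_pow_gap k (x := t+d) (y := t) htpos.le (by linarith)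
    have h2 : (t+d)^(k-1) ≤ (2*t)^(k-1) :=
      pow_le_pow_left₀ (by linarith) (by linarith [htd]) _
    have h3 : (k:ℝ) * (t + d - t) * (t+d)^(k-1) = (k:ℝ) * d * (t+d)^(k-1) := by ring
    calc (t+d)^k - t^k ≤ (k:ℝ) * (t + d - t) * (t+d)^(k-1) := h1
      _ = (k:ℝ) * d * (t+d)^(k-1) := h3
      _ ≤ (k:ℝ) * d * (2*t)^(k-1) := mul_le_mul_of_nonneg_left h2 (by positivity)
  have hgap2 : t^k - (t-d)^k ≤ (k:ℝ) * d * (2*t)^(k-1) := by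
    have h1 := aux_pow_gap k (x := t) (y := t-d) htd0 (by linarith)
    have h2 : t^(k-1) ≤ (2*t)^(k-1) := pow_le_pow_left₀ htpos.le (by linarith) _
    have h3 : (k:ℝ) * (t - (t - d)) * t^(k-1) = (k:ℝ) * d * t^(k-1) := by ring
    calc t^k - (t-d)^k ≤ (k:ℝ) * (t - (t - d)) * t^(k-1) := h1
      _ = (k:ℝ) * d * t^(k-1) := h3
      _ ≤ (k:ℝ) * d * (2*t)^(k-1) := mul_le_mul_of_nonneg_left h2 (by positivity)
  have hA1 : A * (t^k - (t-d)^k) ≤ A * ((k:ℝ)*d*(2*t)^(k-1)) :=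
    mul_le_mul_of_nonneg_left hgap2 hAnn
  have hA2 : A * ((t+d)^k - t^k) ≤ A * ((k:ℝ)*d*(2*t)^(k-1)) :=
    mul_le_mul_of_nonneg_left hgap1 hAnn
  have hre : A * ((k:ℝ)*d*(2*t)^(k-1)) = A*((k:ℝ)*d*2^(k-1))*t^(k-1) := by
    rw [mul_pow]; ring
  have hexp1 : A * (t^k - (t-d)^k) = A*t^k - A*(t-d)^k := by ring
  have hexp2 : A * ((t+d)^k - t^k) = A*(t+d)^k - A*t^k := by ring
  rw [Real.norm_eq_abs, Real.norm_eq_abs, hcards, htk, htk1,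
    abs_of_nonneg (by positivity : (0:ℝ) ≤ t^(k-1)), abs_le]
  constructor
  · linarith [hlb2, hA1, hre, hexp1]
  · linarith [hub2, hA2, hre, hexp2]
end

section
/- Let k ≥ 2, 0 ≤ n ≤ k−1, and let μ be a primitive k-th root of unity. Then for all x ≠ 0 with ϑ_{q^k}(x^k) ≠ 0, c_{k,n}(q) = (q^{n²/k} x^{−n} / (k · ϑ_{q^k}(x^k))) · ∑_{j mod k} μ^{−nj} ϑ^k(x q^{−n/k} μ^j). -/
open Complex

noncomputable def varTheta (τ x : ℂ) : ℂ :=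
  ∑' n : ℤ, Complex.exp (Real.pi * I * (n : ℂ) ^ 2 * τ) * x ^ n

noncomputable def cCoeff (k : ℕ) (n : ℤ) (τ : ℂ) : ℂ :=
  ∑' m : {f : Fin k → ℤ // ∑ i, f i = n},
    Complex.exp (Real.pi * I * τ * (∑ i, (m.1 i : ℂ) ^ 2))

namespace Stmt19Aux

noncomputable def term (τ x : ℂ) (m : ℤ) : ℂ :=
  Complex.exp (Real.pi * I * (m : ℂ) ^ 2 * τ) * x ^ m

lemma term_eq_jacobi {x : ℂ} (hx : x ≠ 0) (τ : ℂ) (m : ℤ) :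
    term τ x m = jacobiTheta₂_term m (Complex.log x / (2 * Real.pi * I)) τ := by
  have h2 : (2 * (Real.pi : ℂ) * I) ≠ 0 := by
    simp [Real.pi_ne_zero, I_ne_zero]
  rw [jacobiTheta₂_term, Complex.exp_add, term, mul_comm]
  congr 1
  · have h : x ^ m = cexp ((m : ℂ) * Complex.log x) := by
      rw [Complex.exp_int_mul, Complex.exp_log hx]
    rw [h]
    congr 1
    field_simp

lemma summable_norm_term {τ : ℂ} (hτ : 0 < τ.im) {x : ℂ} (hx : x ≠ 0) :
    Summable fun m : ℤ => ‖term τ x m‖ := by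
  set z := Complex.log x / (2 * Real.pi * I) with hz
  refine (summable_pow_mul_jacobiTheta₂_term_bound |z.im| hτ 0).of_nonneg_of_le
    (fun _ => norm_nonneg _) fun m => ?_
  rw [term_eq_jacobi hx τ m, ← hz]
  simpa using norm_jacobiTheta₂_term_le hτ (le_refl |z.im|) (le_refl τ.im) m

lemma hasSum_term {τ : ℂ} (hτ : 0 < τ.im) {x : ℂ} (hx : x ≠ 0) :
    HasSum (term τ x) (varTheta τ x) :=
  (summable_norm_term hτ hx).of_norm.hasSum

noncomputable def pe (k : ℕ) : (Fin (k + 1) → ℤ) ≃ ℤ × (Fin k → ℤ) :=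
  (Fin.consEquiv (fun _ : Fin (k + 1) => ℤ)).symm

lemma prod_summable_hasSum {g : ℤ → ℂ} (hg : Summable fun m => ‖g m‖) (k : ℕ) :
    Summable (fun f : Fin k → ℤ => ‖∏ i, g (f i)‖) ∧
      HasSum (fun f : Fin k → ℤ => ∏ i, g (f i)) ((∑' m, g m) ^ k) := by
  induction k with
  | zero =>
      constructor
      · exact (hasSum_single (α := ℝ) (f := fun f : Fin 0 → ℤ => ‖∏ i, g (f i)‖)
          (fun i => i.elim0) (fun b' hb' =>
            absurd (funext fun i => i.elim0) hb')).summable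
      · have h := hasSum_single (α := ℂ) (f := fun f : Fin 0 → ℤ => ∏ i, g (f i))
          (fun i => i.elim0) (fun b' hb' => absurd (funext fun i => i.elim0) hb')
        simpa using h
  | succ k ih =>
      obtain ⟨ihS, ihH⟩ := ih
      have hcomp : ∀ f : Fin (k + 1) → ℤ,
          ∏ i, g (f i) = g ((pe k f).1) * ∏ i, g ((pe k f).2 i) := by
        intro f
        rw [Fin.prod_univ_succ]
        rfl
      constructor
      · have hS2 : Summable (fun p : ℤ × (Fin k → ℤ) => ‖g p.1‖ * ‖∏ i, g (p.2 i)‖) :=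
          Summable.mul_of_nonneg (f := fun m : ℤ => ‖g m‖)
            (g := fun f : Fin k → ℤ => ‖∏ i, g (f i)‖) hg ihS (fun _ => norm_nonneg _) (fun _ => norm_nonneg _)
        have := hS2.comp_injective (pe k).injective
        refine this.congr fun f => ?_
        simp only [Function.comp_apply]
        rw [← norm_mul, ← hcomp]
      · have hS2 : Summable (fun p : ℤ × (Fin k → ℤ) => g p.1 * ∏ i, g (p.2 i)) :=
          summable_mul_of_summable_norm (f := g)
            (g := fun f : Fin k → ℤ => ∏ i, g (f i)) hg ihS
        have hval : ((∑' m, g m) * ∑' f : Fin k → ℤ, ∏ i, g (f i))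
            = ∑' p : ℤ × (Fin k → ℤ), g p.1 * ∏ i, g (p.2 i) :=
          tsum_mul_tsum_of_summable_norm (f := g)
            (g := fun f : Fin k → ℤ => ∏ i, g (f i)) hg ihS
        have h3 : HasSum ((fun p : ℤ × (Fin k → ℤ) => g p.1 * ∏ i, g (p.2 i)) ∘ (pe k))
            (∑' p : ℤ × (Fin k → ℤ), g p.1 * ∏ i, g (p.2 i)) :=
          (Equiv.hasSum_iff (pe k)).2 hS2.hasSum
        have h4 : (∑' p : ℤ × (Fin k → ℤ), g p.1 * ∏ i, g (p.2 i)) = (∑' m, g m) ^ (k + 1) := by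
          rw [← hval, ihH.tsum_eq, pow_succ]
          ring
        rw [h4] at h3
        refine h3.congr_fun fun f => ?_
        simp only [Function.comp_apply]
        exact hcomp f

lemma prod_term {τ x : ℂ} (hx : x ≠ 0) {k : ℕ} (f : Fin k → ℤ) :
    ∏ i, term τ x (f i) =
      Complex.exp (Real.pi * I * τ * ∑ i, ((f i : ℂ)) ^ 2) * x ^ (∑ i, f i) := by
  have hu : ∀ s : Finset (Fin k), ∏ i ∈ s, term τ x (f i) =
      Complex.exp (Real.pi * I * τ * ∑ i ∈ s, ((f i : ℂ)) ^ 2) * x ^ (∑ i ∈ s, f i) := by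
    intro s
    induction s using Finset.induction with
    | empty => simp
    | @insert j s hj ih =>
        rw [Finset.prod_insert hj, Finset.sum_insert hj, Finset.sum_insert hj, ih, term,
          zpow_add₀ hx, mul_add, Complex.exp_add]
        ring
  exact hu Finset.univ

lemma fiber_tsum {τ x : ℂ} (hx : x ≠ 0) (k : ℕ) (m : ℤ) :
    ∑' f : ((fun f : Fin k → ℤ => ∑ i, f i) ⁻¹' {m}),
        ∏ i, term τ x (f.1 i) = cCoeff k m τ * x ^ m := by
  let e : {f : Fin k → ℤ // ∑ i, f i = m} ≃
      ((fun f : Fin k → ℤ => ∑ i, f i) ⁻¹' {m}) :=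
    ⟨fun f => ⟨f.1, f.2⟩, fun f => ⟨f.1, f.2⟩, fun f => rfl, fun f => rfl⟩
  rw [← e.tsum_eq, cCoeff, ← tsum_mul_right]
  refine tsum_congr fun f => ?_
  have h1 : (e f).1 = f.1 := rfl
  rw [h1, prod_term hx, f.2]

lemma key {τ : ℂ} (hτ : 0 < τ.im) (k : ℕ) {x : ℂ} (hx : x ≠ 0) :
    HasSum (fun m : ℤ => cCoeff k m τ * x ^ m) ((varTheta τ x) ^ k) := by
  obtain ⟨hS, hH⟩ := prod_summable_hasSum (summable_norm_term hτ hx) k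
  have h2 := hH.tsum_fiberwise (fun f => ∑ i, f i)
  have h3 : (fun m : ℤ => cCoeff k m τ * x ^ m) =
      fun m : ℤ => ∑' f : ((fun f : Fin k → ℤ => ∑ i, f i) ⁻¹' {m}),
        ∏ i, term τ x (f.1 i) := funext fun m => (fiber_tsum hx k m).symm
  rw [h3]
  exact h2

lemma cCoeff_shift (k : ℕ) (τ : ℂ) (n l : ℤ) :
    cCoeff k (n + l * k) τ =
      Complex.exp (Real.pi * I * τ * (2 * l * n + k * l ^ 2)) * cCoeff k n τ := by
  rw [cCoeff, cCoeff, ← tsum_mul_left]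
  let E : {f : Fin k → ℤ // ∑ i, f i = n} ≃ {f : Fin k → ℤ // ∑ i, f i = n + l * k} :=
    { toFun := fun f => ⟨fun i => f.1 i + l, by
        rw [Finset.sum_add_distrib, f.2, Finset.sum_const, Finset.card_univ, Fintype.card_fin]
        push_cast; ring⟩
      invFun := fun f => ⟨fun i => f.1 i - l, by
        rw [Finset.sum_sub_distrib, f.2, Finset.sum_const, Finset.card_univ, Fintype.card_fin]
        push_cast; ring⟩
      left_inv := fun f => by ext i; simp
      right_inv := fun f => by ext i; simp }
  rw [← E.tsum_eq]
  refine tsum_congr fun f => ?_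
  have hv : ∀ i, ((E f).1 i : ℂ) = (f.1 i : ℂ) + (l : ℂ) := fun i => by
    show (((f.1 i + l : ℤ)) : ℂ) = _
    push_cast; ring
  rw [← Complex.exp_add]
  congr 1
  have hsum : ∑ i, ((f.1 i : ℂ)) = (n : ℂ) := by
    rw [show ∑ i, ((f.1 i : ℂ)) = ((∑ i, f.1 i : ℤ) : ℂ) by push_cast; rfl, f.2]
  have hexp : ∑ i, ((E f).1 i : ℂ) ^ 2
      = ∑ i, ((f.1 i : ℂ) ^ 2 + 2 * l * (f.1 i : ℂ) + (l : ℂ) ^ 2) := by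
    refine Finset.sum_congr rfl fun i _ => ?_
    rw [hv i]; ring
  rw [hexp, Finset.sum_add_distrib, Finset.sum_add_distrib, Finset.sum_const,
    Finset.card_univ, Fintype.card_fin, ← Finset.mul_sum, hsum]
  push_cast
  ring

lemma rootsum {k : ℕ} (hk : k ≠ 0) {μ : ℂ} (hμ : IsPrimitiveRoot μ k) (d : ℤ) :
    ∑ j ∈ Finset.range k, (μ ^ d) ^ j = if (k : ℤ) ∣ d then (k : ℂ) else 0 := by
  by_cases h : μ ^ d = 1
  · rw [if_pos ((hμ.zpow_eq_one_iff_dvd d).1 h), h]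
    simp
  · rw [if_neg (fun hd => h ((hμ.zpow_eq_one_iff_dvd d).2 hd)), geom_sum_eq h]
    have hone : ((μ ^ d) ^ k : ℂ) = 1 := by
      rw [← zpow_natCast (μ ^ d) k, ← zpow_mul, mul_comm, zpow_mul, zpow_natCast, hμ.pow_eq_one]
      exact one_zpow d
    rw [hone, sub_self, zero_div]

end Stmt19Aux

open Stmt19Aux

/-- For `μ` a primitive `k`-th root of unity and `0 ≤ n ≤ k-1`,
`c_{k,n}(q) = (q^{n²/k} x^{-n} / (k ϑ_{q^k}(x^k))) ∑_{j mod k} μ^{-nj} ϑ^k(x q^{-n/k} μ^j)`,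
with `q = e^{2πiτ}` and `q^{t} := e^{2πiτt}`. -/
theorem stmt19 (τ : ℂ) (hτ : 0 < τ.im)
    (k : ℕ) (hk : 2 ≤ k) (n : ℕ) (hn : n ≤ k - 1)
    (μ : ℂ) (hμ : IsPrimitiveRoot μ k)
    (x : ℂ) (hx : x ≠ 0) (hϑ : varTheta ((k : ℂ) * τ) (x ^ k) ≠ 0) :
    cCoeff k n τ =
      Complex.exp (2 * Real.pi * I * τ * (n : ℂ) ^ 2 / k) * x ^ (-(n : ℤ)) /
          ((k : ℂ) * varTheta ((k : ℂ) * τ) (x ^ k)) *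
        ∑ j ∈ Finset.range k,
          μ ^ (-((n : ℤ) * j)) *
            (varTheta τ (x * Complex.exp (-(2 * Real.pi * I * τ * n) / k) * μ ^ j)) ^ k := by
  have hk0 : k ≠ 0 := by omega
  have hkC : (k : ℂ) ≠ 0 := Nat.cast_ne_zero.2 hk0
  have hkZ : (k : ℤ) ≠ 0 := Int.natCast_ne_zero.2 hk0
  have hμ0 : μ ≠ 0 := hμ.ne_zero hk0
  set w : ℂ := Complex.exp (-(2 * Real.pi * I * τ * n) / k) with hwdef
  have hw0 : w ≠ 0 := Complex.exp_ne_zero _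
  have hy0 : x * w ≠ 0 := mul_ne_zero hx hw0
  set Θ : ℂ := varTheta ((k : ℂ) * τ) (x ^ k) with hΘdef
  set C : ℂ := cCoeff k (n : ℤ) τ with hCdef
  -- step 1 : expand each theta power as a series
  have hkey : ∀ j : ℕ, HasSum (fun m : ℤ => cCoeff k m τ * (x * w * μ ^ j) ^ m)
      ((varTheta τ (x * w * μ ^ j)) ^ k) := fun j =>
    key hτ k (mul_ne_zero hy0 (pow_ne_zero _ hμ0))
  have h1 : ∑ j ∈ Finset.range k, μ ^ (-((n : ℤ) * j)) * (varTheta τ (x * w * μ ^ j)) ^ k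
      = ∑' m : ℤ, ∑ j ∈ Finset.range k,
          μ ^ (-((n : ℤ) * j)) * (cCoeff k m τ * (x * w * μ ^ j) ^ m) := by
    rw [Summable.tsum_finsetSum fun j _ => ((hkey j).summable.mul_left _)]
    refine Finset.sum_congr rfl fun j _ => ?_
    rw [← (hkey j).tsum_eq, tsum_mul_left]
  -- step 2 : root-of-unity filter, pointwise in m
  have h2 : ∀ m : ℤ, ∑ j ∈ Finset.range k,
        μ ^ (-((n : ℤ) * j)) * (cCoeff k m τ * (x * w * μ ^ j) ^ m)
      = cCoeff k m τ * (x * w) ^ m * (if (k : ℤ) ∣ (m - n) then (k : ℂ) else 0) := by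
    intro m
    rw [← rootsum hk0 hμ (m - n), Finset.mul_sum]
    refine Finset.sum_congr rfl fun j _ => ?_
    have hμj : μ ^ (-((n : ℤ) * j)) * μ ^ ((j : ℤ) * m) = (μ ^ ((m - (n : ℤ)))) ^ (j : ℤ) := by
      rw [← zpow_mul, ← zpow_add₀ hμ0]
      congr 1
      ring
    rw [mul_zpow, ← zpow_natCast μ j, ← zpow_mul, ← zpow_natCast (μ ^ ((m - (n : ℤ)))) j,
      ← hμj]
    ring
  -- step 3 : reindex the series over multiples
  have hinj : Function.Injective (fun l : ℤ => (n : ℤ) + l * k) := by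
    intro a b hab
    simp only at hab
    exact mul_right_cancel₀ hkZ (by omega)
  have h3 : (∑' m : ℤ, cCoeff k m τ * (x * w) ^ m *
        (if (k : ℤ) ∣ (m - n) then (k : ℂ) else 0))
      = ∑' l : ℤ, cCoeff k ((n : ℤ) + l * k) τ * (x * w) ^ ((n : ℤ) + l * k) *
          (if (k : ℤ) ∣ (((n : ℤ) + l * k) - n) then (k : ℂ) else 0) := by
    refine (hinj.tsum_eq ?_).symm
    intro m hm
    rcases em ((k : ℤ) ∣ (m - n)) with ⟨c, hc⟩ | h
    · exact ⟨c, by show (n : ℤ) + c * k = m; linarith [hc, mul_comm c (k : ℤ)]⟩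
    · exfalso
      apply hm
      simp only [if_neg h, mul_zero]
  -- step 4 : evaluate the terms
  have h4 : ∀ l : ℤ, cCoeff k ((n : ℤ) + l * k) τ * (x * w) ^ ((n : ℤ) + l * k) *
        (if (k : ℤ) ∣ (((n : ℤ) + l * k) - n) then (k : ℂ) else 0)
      = ((k : ℂ) * C * (x * w) ^ (n : ℤ)) *
          (Complex.exp (Real.pi * I * (l : ℂ) ^ 2 * ((k : ℂ) * τ)) * (x ^ k) ^ l) := by
    intro l
    have hxlk : x ^ (l * (k : ℤ)) = (x ^ k) ^ l := by
      rw [← zpow_natCast x k, ← zpow_mul, mul_comm]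
    have hwlk : w ^ (l * (k : ℤ)) = Complex.exp (((l * (k : ℤ) : ℤ) : ℂ) *
        (-(2 * Real.pi * I * τ * n) / k)) := by
      rw [hwdef, ← Complex.exp_int_mul]
    have hexp : Complex.exp (Real.pi * I * (l : ℂ) ^ 2 * ((k : ℂ) * τ))
        = Complex.exp (Real.pi * I * τ * (2 * (l : ℂ) * ((n : ℤ) : ℂ) + (k : ℂ) * (l : ℂ) ^ 2)) *
          Complex.exp (((l * (k : ℤ) : ℤ) : ℂ) * (-(2 * Real.pi * I * τ * n) / k)) := by
      rw [← Complex.exp_add]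
      congr 1
      push_cast
      field_simp
      ring
    rw [if_pos ⟨l, by ring⟩, cCoeff_shift k τ n l, zpow_add₀ hy0, mul_zpow x w (l * (k : ℤ)),
      hxlk, hwlk, ← hCdef, hexp]
    ring
  -- assemble : the j-sum equals k * C * (x*w)^n * Θ
  have hS : ∑ j ∈ Finset.range k, μ ^ (-((n : ℤ) * j)) * (varTheta τ (x * w * μ ^ j)) ^ k
      = ((k : ℂ) * C * (x * w) ^ (n : ℤ)) * Θ := by
    rw [h1, tsum_congr h2, h3, tsum_congr h4, tsum_mul_left]
    congr 1
  -- final algebra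
  rw [hS]
  have hΘk : (k : ℂ) * Θ ≠ 0 := mul_ne_zero hkC hϑ
  have hyn : (x * w) ^ (n : ℤ) = x ^ (n : ℤ) * w ^ (n : ℤ) := mul_zpow x w _
  have hwn : w ^ (n : ℤ) = Complex.exp (((n : ℤ) : ℂ) * (-(2 * Real.pi * I * τ * n) / k)) := by
    rw [hwdef, ← Complex.exp_int_mul]
  have hE : Complex.exp (2 * Real.pi * I * τ * (n : ℂ) ^ 2 / k) *
      Complex.exp (((n : ℤ) : ℂ) * (-(2 * Real.pi * I * τ * n) / k)) = 1 := by
    rw [← Complex.exp_add]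
    have harg : 2 * Real.pi * I * τ * (n : ℂ) ^ 2 / k +
        ((n : ℤ) : ℂ) * (-(2 * Real.pi * I * τ * n) / k) = 0 := by
      push_cast
      field_simp
      ring
    rw [harg, Complex.exp_zero]
  have hxn : x ^ (-(n : ℤ)) * x ^ (n : ℤ) = 1 := by
    rw [← zpow_add₀ hx]
    simp
  rw [hyn, hwn]
  have hfin : Complex.exp (2 * Real.pi * I * τ * (n : ℂ) ^ 2 / k) * x ^ (-(n : ℤ)) /
        ((k : ℂ) * Θ) * (((k : ℂ) * C * (x ^ (n : ℤ) *
          Complex.exp (((n : ℤ) : ℂ) * (-(2 * Real.pi * I * τ * n) / k)))) * Θ)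
      = C * ((Complex.exp (2 * Real.pi * I * τ * (n : ℂ) ^ 2 / k) *
          Complex.exp (((n : ℤ) : ℂ) * (-(2 * Real.pi * I * τ * n) / k))) *
            (x ^ (-(n : ℤ)) * x ^ (n : ℤ))) * (((k : ℂ) * Θ) * ((k : ℂ) * Θ)⁻¹) := by
    rw [div_eq_mul_inv]
    ring
  rw [hfin, hE, hxn, mul_inv_cancel₀ hΘk, mul_one, mul_one, mul_one]
end
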